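/- arXiv:math/0211068 — 3 statements merged into one kernel-verified Lean document; each statement's English description precedes it below -/
import Mathlib

section
/- Let u and v be 1-cocycles on Γ in Aut_S(g(S)). Then g(S)_u and g(S)_v are isomorphic as Lie algebras over R if and only if u and v are cohomologous, i.e. if and only if there exists f ∈ Aut_S(g(S)) such that v_ī = f⁻¹ ∘ u_ī ∘ ⁱf for all ī ∈ Γ. -/
open scoped TensorProduct
open LaurentPolynomial

set_option maxHeartbeats 1000000
set_option synthInstance.maxHeartbeats 400000

noncomputable section

namespace LoopPaper

variable {k : Type*} [Field k] {g : Type*} [LieRing g] [LieAlgebra k g]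

/-- A linear automorphism of a Lie algebra is a Lie algebra automorphism if it
preserves brackets. -/
def IsLieAut (σ : g ≃ₗ[k] g) : Prop := ∀ x y : g, σ ⁅x, y⁆ = ⁅σ x, σ y⁆

theorem IsLieAut.one : IsLieAut (1 : g ≃ₗ[k] g) := fun _ _ => rfl

theorem IsLieAut.mul {σ τ : g ≃ₗ[k] g} (hσ : IsLieAut σ) (hτ : IsLieAut τ) :
    IsLieAut (σ * τ) := fun x y => by
  show σ (τ ⁅x, y⁆) = ⁅σ (τ x), σ (τ y)⁆
  rw [hτ, hσ]

theorem IsLieAut.inv {σ : g ≃ₗ[k] g} (hσ : IsLieAut σ) : IsLieAut σ⁻¹ := fun x y => by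
  apply σ.injective
  have h1 : ∀ z, σ (σ⁻¹ z) = z := fun z => σ.apply_symm_apply z
  rw [h1, hσ, h1, h1]

/-! ### The variable-scaling automorphism `z ↦ c z` of `k[z,z⁻¹]` -/

/-- The unit `c^n • z^n` of the Laurent polynomial ring. -/
def scaleUnit (c : kˣ) (n : ℤ) : (LaurentPolynomial k)ˣ where
  val := ((c ^ n : kˣ) : k) • T n
  inv := ((c ^ (-n) : kˣ) : k) • T (-n)
  val_inv := by
    rw [smul_mul_smul_comm, ← T_add, ← Units.val_mul, ← zpow_add, add_neg_cancel, zpow_zero,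
      Units.val_one, T_zero, one_smul]
  inv_val := by
    rw [smul_mul_smul_comm, ← T_add, ← Units.val_mul, ← zpow_add, neg_add_cancel, zpow_zero,
      Units.val_one, T_zero, one_smul]

/-- The homomorphism `n ↦ c^n • z^n` from `ℤ` to the units of `k[z,z⁻¹]`. -/
def scaleUnitHom (c : kˣ) : Multiplicative ℤ →* (LaurentPolynomial k)ˣ where
  toFun n := scaleUnit c n.toAdd
  map_one' := Units.ext (by
    show ((c ^ (0 : ℤ) : kˣ) : k) • T (0 : ℤ) = 1
    rw [zpow_zero, Units.val_one, T_zero, one_smul])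
  map_mul' a b := Units.ext (by
    show ((c ^ (a.toAdd + b.toAdd) : kˣ) : k) • T (a.toAdd + b.toAdd) =
      (((c ^ a.toAdd : kˣ) : k) • T a.toAdd) * (((c ^ b.toAdd : kˣ) : k) • T b.toAdd)
    rw [smul_mul_smul_comm, ← T_add, ← Units.val_mul, ← zpow_add])

/-- The `k`-algebra endomorphism of `k[z,z⁻¹]` with `z ↦ c z`. -/
def scaleVar (c : kˣ) : LaurentPolynomial k →ₐ[k] LaurentPolynomial k :=
  AddMonoidAlgebra.lift k _ ℤ ((Units.coeHom _).comp (scaleUnitHom c))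

theorem scaleVar_T (c : kˣ) (n : ℤ) : scaleVar c (T n) = ((c ^ n : kˣ) : k) • T n := by
  have h : (T n : LaurentPolynomial k) = AddMonoidAlgebra.of k ℤ (Multiplicative.ofAdd n) := rfl
  rw [h, scaleVar, AddMonoidAlgebra.lift_of]
  rfl

theorem scaleVar_comp (c d : kˣ) :
    (scaleVar c).comp (scaleVar d) = scaleVar (k := k) (c * d) := by
  apply AddMonoidAlgebra.algHom_ext
  intro n
  have hT : (AddMonoidAlgebra.single n 1 : LaurentPolynomial k) = T n := rfl
  simp only [AlgHom.coe_comp, Function.comp_apply, hT]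
  rw [scaleVar_T, map_smul, scaleVar_T, smul_smul, scaleVar_T]
  congr 1
  rw [mul_zpow, Units.val_mul, mul_comm]
  exact Subsingleton.elim _ _

theorem scaleVar_id : scaleVar (1 : kˣ) = AlgHom.id k (LaurentPolynomial k) := by
  apply AddMonoidAlgebra.algHom_ext
  intro n
  have hT : (AddMonoidAlgebra.single n 1 : LaurentPolynomial k) = T n := rfl
  simp only [hT, AlgHom.coe_id, id_eq]
  rw [scaleVar_T, one_zpow, Units.val_one, one_smul]
  exact Subsingleton.elim _ _

/-- The `k`-algebra automorphism of `k[z,z⁻¹]` with `z ↦ c z`. -/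
def scaleVarEquiv (c : kˣ) : LaurentPolynomial k ≃ₐ[k] LaurentPolynomial k :=
  AlgEquiv.ofAlgHom (scaleVar c) (scaleVar c⁻¹)
    (by rw [scaleVar_comp, mul_inv_cancel, scaleVar_id])
    (by rw [scaleVar_comp, inv_mul_cancel, scaleVar_id])

theorem scaleVarEquiv_apply (c : kˣ) (p : LaurentPolynomial k) :
    scaleVarEquiv c p = scaleVar c p := rfl


/-- `R = k[t,t⁻¹]`, identified with the `k`-subalgebra of `S = k[z,z⁻¹]` generated by
`t = z^m` and `t⁻¹ = z^{-m}`. -/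
def Rsub (k : Type*) [Field k] (m : ℕ) : Subalgebra k (LaurentPolynomial k) :=
  Algebra.adjoin k {T (m : ℤ), T (-(m : ℤ))}

/-- `g(S) = g ⊗_k S` is a Lie algebra over `k` (by restriction from `S`). -/
instance instLieAlgebraTensorBase : LieAlgebra k (LaurentPolynomial k ⊗[k] g) where
  lie_smul c x y := by
    have h := lie_smul (algebraMap k (LaurentPolynomial k) c) x y
    rwa [algebraMap_smul, algebraMap_smul] at h

/-- The underlying submodule `⊕_{i ∈ ℤ} g_ī ⊗ z^i` of the loop algebra. -/
def loopCarrier (ζ : k) (σ : g ≃ₗ[k] g) : Submodule k (LaurentPolynomial k ⊗[k] g) :=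
  Submodule.span k {p | ∃ (i : ℤ) (x : g), σ x = ζ ^ i • x ∧ p = T i ⊗ₜ[k] x}

theorem loop_lie_mem {ζ : k} (hζ0 : ζ ≠ 0) {σ : g ≃ₗ[k] g} (hbr : IsLieAut σ)
    {x y : LaurentPolynomial k ⊗[k] g} (hx : x ∈ loopCarrier ζ σ) (hy : y ∈ loopCarrier ζ σ) :
    ⁅x, y⁆ ∈ loopCarrier ζ σ := by
  have key : ∀ p ∈ {p : LaurentPolynomial k ⊗[k] g |
      ∃ (i : ℤ) (x : g), σ x = ζ ^ i • x ∧ p = T i ⊗ₜ[k] x},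
      ∀ q, q ∈ loopCarrier ζ σ → ⁅p, q⁆ ∈ loopCarrier ζ σ := by
    rintro p ⟨i, a, ha, rfl⟩ q hq
    unfold loopCarrier at hq ⊢
    induction hq using Submodule.span_induction with
    | mem q hq =>
      obtain ⟨j, b, hb, rfl⟩ := hq
      rw [LieAlgebra.ExtendScalars.bracket_tmul, ← T_add]
      refine Submodule.subset_span ⟨i + j, ⁅a, b⁆, ?_, rfl⟩
      rw [hbr, ha, hb, smul_lie, lie_smul, smul_smul, ← zpow_add₀ hζ0]
    | zero =>
      have h0 : ⁅(T i ⊗ₜ[k] a : LaurentPolynomial k ⊗[k] g), (0 : LaurentPolynomial k ⊗[k] g)⁆ = 0 :=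
        lie_zero (T i ⊗ₜ[k] a : LaurentPolynomial k ⊗[k] g)
      rw [h0]; exact zero_mem _
    | add q r _ _ hq hr =>
      have h0 : ⁅(T i ⊗ₜ[k] a : LaurentPolynomial k ⊗[k] g), q + r⁆ = ⁅T i ⊗ₜ[k] a, q⁆ + ⁅T i ⊗ₜ[k] a, r⁆ :=
        lie_add (T i ⊗ₜ[k] a : LaurentPolynomial k ⊗[k] g) q r
      rw [h0]; exact add_mem hq hr
    | smul c q _ hq =>
      have h0 : ⁅(T i ⊗ₜ[k] a : LaurentPolynomial k ⊗[k] g), c • q⁆ = c • ⁅T i ⊗ₜ[k] a, q⁆ :=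
        lie_smul c (T i ⊗ₜ[k] a : LaurentPolynomial k ⊗[k] g) q
      rw [h0]; exact Submodule.smul_mem _ _ hq
  unfold loopCarrier at hx
  induction hx using Submodule.span_induction with
  | mem p hp => exact key p hp y hy
  | zero =>
    have h0 : ⁅(0 : LaurentPolynomial k ⊗[k] g), y⁆ = 0 := zero_lie y
    rw [h0]; exact zero_mem _
  | add p r _ _ hp hr =>
    have h0 : ⁅p + r, y⁆ = ⁅p, y⁆ + ⁅r, y⁆ := add_lie p r y
    rw [h0]; exact add_mem hp hr
  | smul c p _ hp =>
    have h0 : ⁅c • p, y⁆ = c • ⁅p, y⁆ := smul_lie c p y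
    rw [h0]; exact Submodule.smul_mem _ _ hp

/-- The loop algebra `L(g,σ) = ⊕_{i ∈ ℤ} g_ī ⊗ z^i`, a Lie subalgebra (over `k`)
of `g(S) = g ⊗_k S`.  Here `m` is a period of `σ` and `ζ` is the chosen root of unity. -/
def loopAlgebra (m : ℕ) (ζ : k) (hζ0 : ζ ≠ 0) (hζm : ζ ^ m = 1) (σ : g ≃ₗ[k] g)
    (hbr : IsLieAut σ) (hσ : σ ^ m = 1) : LieSubalgebra k (LaurentPolynomial k ⊗[k] g) where
  __ := loopCarrier ζ σ
  lie_mem' := fun hx hy => loop_lie_mem hζ0 hbr hx hy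

theorem mem_loopAlgebra_iff {m : ℕ} {ζ : k} {hζ0 : ζ ≠ 0} {hζm : ζ ^ m = 1} {σ : g ≃ₗ[k] g}
    {hbr : IsLieAut σ} {hσ : σ ^ m = 1} {x : LaurentPolynomial k ⊗[k] g} :
    x ∈ loopAlgebra m ζ hζ0 hζm σ hbr hσ ↔ x ∈ loopCarrier ζ σ := Iff.rfl

theorem T_smul_loop {ζ : k} (hζ0 : ζ ≠ 0) {σ : g ≃ₗ[k] g} {j : ℤ} (hj : ζ ^ j = 1)
    {x : LaurentPolynomial k ⊗[k] g} (hx : x ∈ loopCarrier ζ σ) :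
    (T j : LaurentPolynomial k) • x ∈ loopCarrier ζ σ := by
  unfold loopCarrier at hx ⊢
  induction hx using Submodule.span_induction with
  | mem p hp =>
    obtain ⟨i, a, ha, rfl⟩ := hp
    rw [TensorProduct.smul_tmul', smul_eq_mul, ← T_add]
    refine Submodule.subset_span ⟨j + i, a, ?_, rfl⟩
    rw [ha, zpow_add₀ hζ0, hj, one_mul]
  | zero => rw [smul_zero]; exact zero_mem _
  | add p q _ _ hp hq => rw [smul_add]; exact add_mem hp hq
  | smul c p _ hp =>
    rw [smul_comm]
    exact Submodule.smul_mem _ _ hp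

theorem Rsub_smul_loop {m : ℕ} {ζ : k} (hζ0 : ζ ≠ 0) (hζm : ζ ^ m = 1) {σ : g ≃ₗ[k] g}
    {r : LaurentPolynomial k} (hr : r ∈ Rsub k m) :
    ∀ x ∈ loopCarrier ζ σ, r • x ∈ loopCarrier (g := g) ζ σ := by
  induction hr using Algebra.adjoin_induction with
  | mem s hs =>
    intro x hx
    rcases hs with rfl | rfl
    · refine T_smul_loop hζ0 ?_ hx
      rw [zpow_natCast, hζm]
    · refine T_smul_loop hζ0 ?_ hx
      rw [zpow_neg, zpow_natCast, hζm, inv_one]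
  | algebraMap c =>
    intro x hx
    rw [algebraMap_smul]
    exact Submodule.smul_mem _ _ hx
  | add r s _ _ hr hs =>
    intro x hx
    rw [add_smul]
    exact add_mem (hr x hx) (hs x hx)
  | mul r s _ _ hr hs =>
    intro x hx
    rw [mul_smul]
    exact hr _ (hs x hx)


/-- The action of `R` on the loop algebra. -/
instance loopSMulR {m : ℕ} {ζ : k} {hζ0 : ζ ≠ 0} {hζm : ζ ^ m = 1} {σ : g ≃ₗ[k] g}
    {hbr : IsLieAut σ} {hσ : σ ^ m = 1} :
    SMul ↥(Rsub k m) ↥(loopAlgebra m ζ hζ0 hζm σ hbr hσ) where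
  smul r x := ⟨(r : LaurentPolynomial k) • (x : LaurentPolynomial k ⊗[k] g),
    Rsub_smul_loop hζ0 hζm r.2 _ x.2⟩

theorem loop_smul_coe {m : ℕ} {ζ : k} {hζ0 : ζ ≠ 0} {hζm : ζ ^ m = 1} {σ : g ≃ₗ[k] g}
    {hbr : IsLieAut σ} {hσ : σ ^ m = 1} (r : ↥(Rsub k m))
    (x : ↥(loopAlgebra m ζ hζ0 hζm σ hbr hσ)) :
    ((r • x : ↥(loopAlgebra m ζ hζ0 hζm σ hbr hσ)) : LaurentPolynomial k ⊗[k] g)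
      = (r : LaurentPolynomial k) • (x : LaurentPolynomial k ⊗[k] g) := rfl

/-- The loop algebra is a module over `R = k[t,t⁻¹] ⊆ k[z,z⁻¹]`. -/
instance loopModuleR {m : ℕ} {ζ : k} {hζ0 : ζ ≠ 0} {hζm : ζ ^ m = 1} {σ : g ≃ₗ[k] g}
    {hbr : IsLieAut σ} {hσ : σ ^ m = 1} :
    Module ↥(Rsub k m) ↥(loopAlgebra m ζ hζ0 hζm σ hbr hσ) where
  one_smul x := Subtype.ext (by simp [loop_smul_coe])
  mul_smul r s x := Subtype.ext (by simp [loop_smul_coe, mul_smul])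
  smul_zero r := Subtype.ext (by simp [loop_smul_coe])
  smul_add r x y := Subtype.ext (by simp [loop_smul_coe, smul_add])
  add_smul r s x := Subtype.ext (by simp [loop_smul_coe, add_smul])
  zero_smul x := Subtype.ext (by simp [loop_smul_coe])


/-- The inclusion of the loop algebra in `g(S)`, as an `R`-linear map. -/
def loopIncl (m : ℕ) (ζ : k) (hζ0 : ζ ≠ 0) (hζm : ζ ^ m = 1) (σ : g ≃ₗ[k] g)
    (hbr : IsLieAut σ) (hσ : σ ^ m = 1) :
    ↥(loopAlgebra m ζ hζ0 hζm σ hbr hσ) →ₗ[↥(Rsub k m)] (LaurentPolynomial k ⊗[k] g) where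
  toFun x := ↑x
  map_add' _ _ := rfl
  map_smul' _ _ := rfl

/-- The eigenspace `{x ∈ g : σ(x) = c x}`. -/
def eigSpace (σ : g ≃ₗ[k] g) (c : k) : Submodule k g where
  carrier := {x | σ x = c • x}
  add_mem' := by
    intro x y hx hy
    show σ (x + y) = c • (x + y)
    rw [map_add, hx, hy, smul_add]
  zero_mem' := by
    show σ 0 = c • (0 : g)
    rw [map_zero, smul_zero]
  smul_mem' := by
    intro t x hx
    show σ (t • x) = c • t • x
    rw [map_smul, hx, smul_comm]

/-- The `R`-algebra automorphism `id ⊗ ι_i` of `g(S)`, where `ι_i(z) = ζ^i z`. -/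
def idTensorIota (ζ : k) (hζ0 : ζ ≠ 0) (i : ℤ) :
    (LaurentPolynomial k ⊗[k] g) ≃ₗ[k] (LaurentPolynomial k ⊗[k] g) :=
  TensorProduct.congr (scaleVarEquiv (Units.mk0 ζ hζ0 ^ i)).toLinearEquiv (LinearEquiv.refl k g)

/-- A `k`-linear automorphism of `g(S)` lies in `Aut_S(g(S))` if it is `S`-linear and
preserves brackets. -/
def IsSAut (f : (LaurentPolynomial k ⊗[k] g) ≃ₗ[k] (LaurentPolynomial k ⊗[k] g)) : Prop :=
  (∀ (s : LaurentPolynomial k) (x : LaurentPolynomial k ⊗[k] g), f (s • x) = s • f x) ∧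
    ∀ x y : LaurentPolynomial k ⊗[k] g, f ⁅x, y⁆ = ⁅f x, f y⁆

/-- The action of `ī ∈ Γ = ℤ/mℤ` on `Aut_S(g(S))`:  `ⁱτ = (id ⊗ ι_i) ∘ τ ∘ (id ⊗ ι_i)⁻¹`. -/
def gammaAct (ζ : k) (hζ0 : ζ ≠ 0) (i : ℤ)
    (τ : (LaurentPolynomial k ⊗[k] g) ≃ₗ[k] (LaurentPolynomial k ⊗[k] g)) :
    (LaurentPolynomial k ⊗[k] g) ≃ₗ[k] (LaurentPolynomial k ⊗[k] g) :=
  ((idTensorIota (g := g) ζ hζ0 i).symm.trans τ).trans (idTensorIota ζ hζ0 i)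

/-- A family `u_ī`, `ī ∈ Γ = ℤ/mℤ` (presented as a function on integer representatives),
is a 1-cocycle on `Γ` in `Aut_S(g(S))` if each `u_i` is an `S`-algebra automorphism,
`u_i` depends only on `i` mod `m`, and `u_{i+j} = u_i ∘ ⁱ(u_j)`. -/
def IsCocycle (m : ℕ) (ζ : k) (hζ0 : ζ ≠ 0)
    (u : ℤ → ((LaurentPolynomial k ⊗[k] g) ≃ₗ[k] (LaurentPolynomial k ⊗[k] g))) : Prop :=
  (∀ i : ℤ, IsSAut (u i)) ∧ (∀ i j : ℤ, (i : ZMod m) = (j : ZMod m) → u i = u j) ∧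
    ∀ i j : ℤ, u (i + j) = (gammaAct ζ hζ0 i (u j)).trans (u i)

/-- The fixed point set `g(S)_u = {x : (u_ī ∘ (id ⊗ ι_i)) x = x for all ī}` of a 1-cocycle. -/
def cocycleFixed (ζ : k) (hζ0 : ζ ≠ 0)
    (u : ℤ → ((LaurentPolynomial k ⊗[k] g) ≃ₗ[k] (LaurentPolynomial k ⊗[k] g))) :
    Set (LaurentPolynomial k ⊗[k] g) :=
  {x | ∀ i : ℤ, u i (idTensorIota ζ hζ0 i x) = x}

/-!
Put `θᵘᵢ := uᵢ ∘ (id ⊗ ιᵢ)`. The cocycle identity says that `i ↦ θᵘᵢ` is an action of `ℤ/m` on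
`g(S)` by `ιᵢ`-semilinear Lie automorphisms, `g(S)_u` is its fixed-point set, and `f` satisfies
`vᵢ = f⁻¹ ∘ uᵢ ∘ ⁱf` exactly when `f ∘ θᵛᵢ = θᵘᵢ ∘ f`. Such an `f` therefore restricts to an
`R`-linear Lie isomorphism `g(S)_v ≅ g(S)_u`.

The converse is Galois descent for `S/R`. As `m` is invertible in `k` and `ζ` is a primitive
`m`-th root of unity, the average `P = m⁻¹ ∑ᵢ θᵘᵢ` projects onto `g(S)_u`, and discrete Fourier
inversion gives `x = ∑_{n<m} zⁿ • P(z⁻ⁿ • x)`. Hence an `R`-isomorphism `e : g(S)_u ≅ g(S)_v`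
extends to the `S`-linear map `x ↦ ∑_{n<m} zⁿ • e(P(z⁻ⁿ • x))`, and all identities needed about
this extension (invertibility, brackets, intertwining `θᵘ` with `θᵛ`) reduce to elements `zⁿ • b`
with `b` fixed.
-/

open Finset

theorem _root_.Function.Periodic.sum_range_add {M : Type*} [AddCommGroup M] {F : ℤ → M}
    {m : ℕ} (hF : Function.Periodic F m) (j : ℤ) :
    ∑ i ∈ range m, F (j + i) = ∑ i ∈ range m, F i := by
  have step : ∀ j : ℤ, ∑ i ∈ range m, F (j + 1 + i) = ∑ i ∈ range m, F (j + i) := fun j => by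
    have h := sum_range_succ' (fun i : ℕ => F (j + i)) m
    rw [sum_range_succ, hF j] at h
    simpa [add_assoc, add_comm (1 : ℤ)] using h.symm
  induction j using Int.induction_on with
  | zero => simp
  | succ n ih => rw [step, ih]
  | pred n ih => rw [← ih, ← step, sub_add_cancel]

theorem _root_.IsPrimitiveRoot.sum_range_zpow_pow {ζ : k} {m : ℕ} (hζ : IsPrimitiveRoot ζ m)
    (j : ℤ) : ∑ i ∈ range m, (ζ ^ j) ^ i = if (m : ℤ) ∣ j then (m : k) else 0 := by
  split_ifs with hdvd
  · simp [(hζ.zpow_eq_one_iff_dvd j).mpr hdvd]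
  · have hne : ζ ^ j ≠ 1 := fun h => hdvd ((hζ.zpow_eq_one_iff_dvd j).mp h)
    rw [geom_sum_eq hne, ← zpow_natCast, ← zpow_mul, mul_comm, zpow_mul, zpow_natCast,
      hζ.pow_eq_one, one_zpow, sub_self, zero_div]

theorem sum_range_ite_dvd_sub {M : Type*} [AddCommMonoid M] {m : ℕ} (hm : 0 < m) (r : ℤ)
    (a : M) : ∑ n ∈ range m, (if (m : ℤ) ∣ r - n then a else 0) = a := by
  have hr := Int.emod_nonneg r (Int.natCast_ne_zero.mpr hm.ne')
  have hr' := Int.emod_lt_of_pos r (Int.natCast_pos.mpr hm)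
  have key : ∀ n ∈ range m, ((m : ℤ) ∣ r - n ↔ (r % m).toNat = n) := fun n hn => by
    have hn : (n : ℤ) < m := Int.ofNat_lt.mpr (mem_range.mp hn)
    rw [Int.dvd_iff_emod_eq_zero, ← Int.emod_eq_emod_iff_emod_sub_eq_zero,
      Int.emod_eq_of_lt (Int.natCast_nonneg n) hn]
    omega
  rw [sum_congr rfl fun n hn => if_congr (key n hn) rfl rfl, sum_ite_eq, if_pos]
  exact mem_range.mpr (by omega)

theorem scaleVarEquiv_T (c : kˣ) (n : ℤ) :
    scaleVarEquiv c (T n) = ((c ^ n : kˣ) : k) • T n := scaleVar_T c n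

theorem scaleVarEquiv_scaleVarEquiv (c d : kˣ) (p : LaurentPolynomial k) :
    scaleVarEquiv c (scaleVarEquiv d p) = scaleVarEquiv (c * d) p :=
  AlgHom.congr_fun (scaleVar_comp c d) p

theorem scaleVarEquiv_eq_self_of_mem_Rsub {m : ℕ} {c : kˣ} (hc : c ^ m = 1)
    {r : LaurentPolynomial k} (hr : r ∈ Rsub k m) : scaleVarEquiv c r = r := by
  have hle : Rsub k m ≤ AlgHom.equalizer (scaleVar c) (AlgHom.id k _) := by
    refine Algebra.adjoin_le ?_
    rintro _ (rfl | rfl) <;> simp [scaleVar_T, zpow_neg, hc]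
  exact hle hr

theorem T_mem_Rsub {m : ℕ} {j : ℤ} (hj : (m : ℤ) ∣ j) :
    (T j : LaurentPolynomial k) ∈ Rsub k m := by
  obtain ⟨q, rfl⟩ := hj
  have hTm : (T m : LaurentPolynomial k) ∈ Rsub k m :=
    Algebra.subset_adjoin (Set.mem_insert _ _)
  have hTm' : (T (-m) : LaurentPolynomial k) ∈ Rsub k m :=
    Algebra.subset_adjoin (Set.mem_insert_of_mem _ rfl)
  induction q using Int.induction_on with
  | zero => rw [mul_zero, T_zero]; exact one_mem _
  | succ n ih => rw [mul_add, mul_one, T_add]; exact mul_mem ih hTm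
  | pred n ih => rw [mul_sub, mul_one, sub_eq_add_neg, T_add]; exact mul_mem ih hTm'

local notation "𝔤S" => LaurentPolynomial k ⊗[k] g

/- The bracket of `𝔤S` elaborates to the `Bracket` instance of `LieAlgebra.ExtendScalars`, which
`rw` and `simp` do not unify with the one in the generic Lie algebra lemmas. -/

theorem tensor_add_lie (x y z : 𝔤S) : ⁅x + y, z⁆ = ⁅x, z⁆ + ⁅y, z⁆ := add_lie x y z

theorem tensor_lie_add (x y z : 𝔤S) : ⁅x, y + z⁆ = ⁅x, y⁆ + ⁅x, z⁆ := lie_add x y z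

theorem tensor_smul_lie_smul (s t : LaurentPolynomial k) (x y : 𝔤S) :
    ⁅s • x, t • y⁆ = (s * t) • ⁅x, y⁆ :=
  calc ⁅s • x, t • y⁆ = s • t • ⁅x, y⁆ :=
        (smul_lie s x (t • y)).trans (congrArg _ (lie_smul t x y))
    _ = (s * t) • ⁅x, y⁆ := smul_smul s t _

section IdTensorIota

variable {ζ : k} {hζ0 : ζ ≠ 0}

theorem idTensorIota_tmul (i : ℤ) (s : LaurentPolynomial k) (a : g) :
    idTensorIota ζ hζ0 i (s ⊗ₜ[k] a) = scaleVarEquiv (Units.mk0 ζ hζ0 ^ i) s ⊗ₜ[k] a := rfl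

theorem idTensorIota_smul (i : ℤ) (s : LaurentPolynomial k) (x : 𝔤S) :
    idTensorIota ζ hζ0 i (s • x) =
      scaleVarEquiv (Units.mk0 ζ hζ0 ^ i) s • idTensorIota ζ hζ0 i x := by
  induction x using TensorProduct.induction_on with
  | zero => simp
  | tmul t a => simp [TensorProduct.smul_tmul', idTensorIota_tmul]
  | add y z hy hz => rw [smul_add, map_add, map_add, smul_add, hy, hz]

theorem idTensorIota_T_smul (i j : ℤ) (x : 𝔤S) :
    idTensorIota ζ hζ0 i ((T j : LaurentPolynomial k) • x) =
      ζ ^ (i * j) • (T j : LaurentPolynomial k) • idTensorIota ζ hζ0 i x := by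
  rw [idTensorIota_smul, scaleVarEquiv_T, ← zpow_mul, Units.val_zpow_eq_zpow_val,
    Units.val_mk0, smul_assoc]

theorem idTensorIota_lie (i : ℤ) (x y : 𝔤S) :
    idTensorIota ζ hζ0 i ⁅x, y⁆ = ⁅idTensorIota ζ hζ0 i x, idTensorIota ζ hζ0 i y⁆ :=
  (LieAlgebra.ExtendScalars.map (scaleVar (Units.mk0 ζ hζ0 ^ i))
    (LieHom.id : g →ₗ⁅k⁆ g)).map_lie x y

theorem idTensorIota_add (i j : ℤ) (x : 𝔤S) :
    idTensorIota ζ hζ0 (i + j) x = idTensorIota ζ hζ0 i (idTensorIota ζ hζ0 j x) := by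
  induction x using TensorProduct.induction_on with
  | zero => simp
  | tmul s a => rw [idTensorIota_tmul, idTensorIota_tmul, idTensorIota_tmul,
      scaleVarEquiv_scaleVarEquiv, zpow_add]
  | add y z hy hz => rw [map_add, map_add, map_add, hy, hz]

theorem gammaAct_apply_idTensorIota (i : ℤ) (τ : 𝔤S ≃ₗ[k] 𝔤S) (x : 𝔤S) :
    gammaAct ζ hζ0 i τ (idTensorIota ζ hζ0 i x) = idTensorIota ζ hζ0 i (τ x) := by
  simp [gammaAct]

variable {m : ℕ}

theorem mk0_pow_eq_one (hζm : ζ ^ m = 1) : Units.mk0 ζ hζ0 ^ m = 1 :=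
  Units.ext (by simpa using hζm)

theorem idTensorIota_add_period (hζm : ζ ^ m = 1) (i : ℤ) (x : 𝔤S) :
    idTensorIota ζ hζ0 (i + m) x = idTensorIota ζ hζ0 i x := by
  induction x using TensorProduct.induction_on with
  | zero => simp
  | tmul s a => rw [idTensorIota_tmul, idTensorIota_tmul, zpow_add, zpow_natCast,
      mk0_pow_eq_one hζm, mul_one]
  | add y z hy hz => rw [map_add, map_add, hy, hz]

theorem idTensorIota_smul_of_mem_Rsub (hζm : ζ ^ m = 1) (i : ℤ) {r : LaurentPolynomial k}
    (hr : r ∈ Rsub k m) (x : 𝔤S) :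
    idTensorIota ζ hζ0 i (r • x) = r • idTensorIota ζ hζ0 i x := by
  have hc : (Units.mk0 ζ hζ0 ^ i) ^ m = 1 := by
    rw [← zpow_natCast, ← zpow_mul, mul_comm, zpow_mul, zpow_natCast, mk0_pow_eq_one hζm,
      one_zpow]
  rw [idTensorIota_smul, scaleVarEquiv_eq_self_of_mem_Rsub hc hr]

end IdTensorIota

def theta (ζ : k) (hζ0 : ζ ≠ 0) (u : ℤ → (𝔤S ≃ₗ[k] 𝔤S)) (i : ℤ) : 𝔤S ≃ₗ[k] 𝔤S :=
  (idTensorIota ζ hζ0 i).trans (u i)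

section Theta

/- `variable` binders spell out `𝔤S`: there the notation does not elaborate against the
section variables `k`, `g`. -/
variable {m : ℕ} {ζ : k} {hζ0 : ζ ≠ 0}
  {u v : ℤ → ((LaurentPolynomial k ⊗[k] g) ≃ₗ[k] (LaurentPolynomial k ⊗[k] g))}

theorem theta_apply (i : ℤ) (x : 𝔤S) : theta ζ hζ0 u i x = u i (idTensorIota ζ hζ0 i x) := rfl

theorem IsCocycle.theta_add (hu : IsCocycle m ζ hζ0 u) (i j : ℤ) (x : 𝔤S) :
    theta ζ hζ0 u (i + j) x = theta ζ hζ0 u i (theta ζ hζ0 u j x) := by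
  rw [theta_apply, hu.2.2 i j, LinearEquiv.trans_apply, idTensorIota_add,
    gammaAct_apply_idTensorIota]
  rfl

theorem IsCocycle.theta_zero (hu : IsCocycle m ζ hζ0 u) (x : 𝔤S) :
    theta ζ hζ0 u 0 x = x := by
  have h := hu.theta_add 0 0 x
  rw [add_zero] at h
  exact ((theta ζ hζ0 u 0).injective h).symm

theorem IsCocycle.theta_add_period (hu : IsCocycle m ζ hζ0 u) (hζm : ζ ^ m = 1) (i : ℤ)
    (x : 𝔤S) : theta ζ hζ0 u (i + m) x = theta ζ hζ0 u i x := by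
  rw [theta_apply, theta_apply, hu.2.1 (i + m) i (by simp), idTensorIota_add_period hζm]

theorem IsCocycle.theta_T_smul (hu : IsCocycle m ζ hζ0 u) (i j : ℤ) (x : 𝔤S) :
    theta ζ hζ0 u i ((T j : LaurentPolynomial k) • x) =
      ζ ^ (i * j) • (T j : LaurentPolynomial k) • theta ζ hζ0 u i x := by
  rw [theta_apply, idTensorIota_T_smul, map_smul, (hu.1 i).1]
  rfl

theorem IsCocycle.theta_smul_of_mem_Rsub (hu : IsCocycle m ζ hζ0 u) (hζm : ζ ^ m = 1) (i : ℤ)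
    {r : LaurentPolynomial k} (hr : r ∈ Rsub k m) (x : 𝔤S) :
    theta ζ hζ0 u i (r • x) = r • theta ζ hζ0 u i x := by
  rw [theta_apply, idTensorIota_smul_of_mem_Rsub hζm i hr, (hu.1 i).1]
  rfl

theorem IsCocycle.theta_lie (hu : IsCocycle m ζ hζ0 u) (i : ℤ) (x y : 𝔤S) :
    theta ζ hζ0 u i ⁅x, y⁆ = ⁅theta ζ hζ0 u i x, theta ζ hζ0 u i y⁆ := by
  rw [theta_apply, idTensorIota_lie, (hu.1 i).2]
  rfl

theorem eq_conj_gammaAct_iff (f : 𝔤S ≃ₗ[k] 𝔤S) (i : ℤ) :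
    v i = ((gammaAct ζ hζ0 i f).trans (u i)).trans f.symm ↔
      ∀ x, f (theta ζ hζ0 v i x) = theta ζ hζ0 u i (f x) := by
  constructor
  · intro h x
    rw [theta_apply, h]
    simp [theta_apply, gammaAct_apply_idTensorIota]
  · intro h
    ext y
    obtain ⟨x, rfl⟩ := (idTensorIota ζ hζ0 i).surjective y
    apply f.injective
    simpa [theta_apply, gammaAct_apply_idTensorIota] using h x

def fixedSubmodule (hu : IsCocycle m ζ hζ0 u) (hζm : ζ ^ m = 1) :
    Submodule ↥(Rsub k m) 𝔤S where
  carrier := cocycleFixed ζ hζ0 u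
  add_mem' {x y} hx hy i := (map_add (theta ζ hζ0 u i) x y).trans (congrArg₂ _ (hx i) (hy i))
  zero_mem' i := map_zero (theta ζ hζ0 u i)
  smul_mem' r x hx i := (hu.theta_smul_of_mem_Rsub hζm i r.2 x).trans (congrArg _ (hx i))

theorem mem_fixedSubmodule_iff {hu : IsCocycle m ζ hζ0 u} {hζm : ζ ^ m = 1} {x : 𝔤S} :
    x ∈ fixedSubmodule hu hζm ↔ ∀ i, theta ζ hζ0 u i x = x := Iff.rfl

theorem lie_mem_fixedSubmodule (hu : IsCocycle m ζ hζ0 u) (hζm : ζ ^ m = 1) {x y : 𝔤S}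
    (hx : x ∈ fixedSubmodule hu hζm) (hy : y ∈ fixedSubmodule hu hζm) :
    ⁅x, y⁆ ∈ fixedSubmodule hu hζm := fun i => by
  rw [← theta_apply, hu.theta_lie, mem_fixedSubmodule_iff.mp hx i,
    mem_fixedSubmodule_iff.mp hy i]

end Theta

def average (m : ℕ) (ζ : k) (hζ0 : ζ ≠ 0) (u : ℤ → (𝔤S ≃ₗ[k] 𝔤S)) : 𝔤S →ₗ[k] 𝔤S :=
  (m : k)⁻¹ • ∑ i ∈ range m, (theta ζ hζ0 u i).toLinearMap

section Average

variable {m : ℕ} {ζ : k} {hζ0 : ζ ≠ 0}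
  {u : ℤ → ((LaurentPolynomial k ⊗[k] g) ≃ₗ[k] (LaurentPolynomial k ⊗[k] g))}

theorem average_apply (x : 𝔤S) :
    average m ζ hζ0 u x = (m : k)⁻¹ • ∑ i ∈ range m, theta ζ hζ0 u i x := by
  simp [average]

theorem average_mem (hu : IsCocycle m ζ hζ0 u) (hζm : ζ ^ m = 1) (x : 𝔤S) :
    average m ζ hζ0 u x ∈ fixedSubmodule hu hζm := by
  intro j
  rw [← theta_apply, average_apply, map_smul, map_sum]
  simp_rw [← hu.theta_add]
  rw [Function.Periodic.sum_range_add (F := fun i => theta ζ hζ0 u i x)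
    (fun i => hu.theta_add_period hζm i x)]

variable [CharZero k]

theorem average_T_smul_of_mem (hu : IsCocycle m ζ hζ0 u) (hm : 0 < m)
    (hζ : IsPrimitiveRoot ζ m) (j : ℤ) {b : 𝔤S} (hb : b ∈ fixedSubmodule hu hζ.pow_eq_one) :
    average m ζ hζ0 u ((T j : LaurentPolynomial k) • b) =
      if (m : ℤ) ∣ j then (T j : LaurentPolynomial k) • b else 0 := by
  have hterm : ∀ i ∈ range m, theta ζ hζ0 u i ((T j : LaurentPolynomial k) • b) =
      (ζ ^ j) ^ i • (T j : LaurentPolynomial k) • b := fun i _ => by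
    rw [hu.theta_T_smul, mem_fixedSubmodule_iff.mp hb, ← zpow_natCast, ← zpow_mul, mul_comm]
  rw [average_apply, sum_congr rfl hterm, ← sum_smul, hζ.sum_range_zpow_pow, smul_smul]
  split_ifs
  · rw [inv_mul_cancel₀ (Nat.cast_ne_zero.mpr hm.ne'), one_smul]
  · rw [mul_zero, zero_smul]

theorem sum_T_smul_average (hu : IsCocycle m ζ hζ0 u) (hm : 0 < m) (hζ : IsPrimitiveRoot ζ m)
    (x : 𝔤S) :
    ∑ n ∈ range m, (T n : LaurentPolynomial k) •
      average m ζ hζ0 u ((T (-n) : LaurentPolynomial k) • x) = x := by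
  have hterm : ∀ n ∈ range m, (T n : LaurentPolynomial k) •
      average m ζ hζ0 u ((T (-n) : LaurentPolynomial k) • x) =
      (m : k)⁻¹ • ∑ i ∈ range m, (ζ ^ (-(i : ℤ))) ^ n • theta ζ hζ0 u i x := fun n _ => by
    rw [average_apply, smul_comm, smul_sum]
    refine congrArg _ (sum_congr rfl fun i _ => ?_)
    rw [hu.theta_T_smul, smul_comm, smul_smul, ← T_add, add_neg_cancel, T_zero, one_smul,
      ← zpow_natCast, ← zpow_mul, mul_neg, neg_mul, mul_comm]
  have hcoeff : ∀ i ∈ range m, ∑ n ∈ range m, (ζ ^ (-(i : ℤ))) ^ n • theta ζ hζ0 u i x =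
      if i = 0 then (m : k) • x else 0 := fun i hi => by
    rw [← sum_smul, hζ.sum_range_zpow_pow]
    split_ifs with hdvd hi0 hi0
    · rw [hi0, Nat.cast_zero, hu.theta_zero]
    · rw [Int.dvd_neg, Int.natCast_dvd_natCast] at hdvd
      exact absurd (Nat.eq_zero_of_dvd_of_lt hdvd (mem_range.mp hi)) hi0
    · simp [hi0] at hdvd
    · rw [zero_smul]
  rw [sum_congr rfl hterm, ← smul_sum, sum_comm, sum_congr rfl hcoeff, sum_ite_eq',
    if_pos (mem_range.mpr hm), smul_smul, inv_mul_cancel₀ (Nat.cast_ne_zero.mpr hm.ne'),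
    one_smul]

theorem induction_on_fixedSubmodule (hu : IsCocycle m ζ hζ0 u) (hm : 0 < m)
    (hζ : IsPrimitiveRoot ζ m) {motive : 𝔤S → Prop} (x : 𝔤S)
    (add : ∀ x y, motive x → motive y → motive (x + y))
    (T_smul : ∀ (n : ℤ) (b : 𝔤S), b ∈ fixedSubmodule hu hζ.pow_eq_one →
      motive ((T n : LaurentPolynomial k) • b)) : motive x := by
  rw [← sum_T_smul_average hu hm hζ x]
  exact sum_induction_nonempty _ _ add (nonempty_range_iff.mpr hm.ne')
    fun n _ => T_smul n _ (average_mem hu hζ.pow_eq_one _)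

end Average

section Extension

variable {m : ℕ} {ζ : k} {hζ0 : ζ ≠ 0}
  {u v w : ℤ → ((LaurentPolynomial k ⊗[k] g) ≃ₗ[k] (LaurentPolynomial k ⊗[k] g))}

def fixedProj (hw : IsCocycle m ζ hζ0 w) (hζm : ζ ^ m = 1) :
    𝔤S →ₗ[k] ↥(fixedSubmodule hw hζm) :=
  LinearMap.codRestrict ((fixedSubmodule hw hζm).restrictScalars k) (average m ζ hζ0 w)
    (average_mem hw hζm)

def extend (hw : IsCocycle m ζ hζ0 w) (hζm : ζ ^ m = 1)
    (L : ↥(fixedSubmodule hw hζm) →ₗ[↥(Rsub k m)] 𝔤S) : 𝔤S →ₗ[k] 𝔤S :=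
  ∑ n ∈ range m, (T n : LaurentPolynomial k) • (L.restrictScalars k ∘ₗ fixedProj hw hζm ∘ₗ
    DistribSMul.toLinearMap k 𝔤S (T (-n) : LaurentPolynomial k))

theorem extend_apply (hw : IsCocycle m ζ hζ0 w) (hζm : ζ ^ m = 1)
    (L : ↥(fixedSubmodule hw hζm) →ₗ[↥(Rsub k m)] 𝔤S) (x : 𝔤S) :
    extend hw hζm L x = ∑ n ∈ range m, (T n : LaurentPolynomial k) •
      L (fixedProj hw hζm ((T (-n) : LaurentPolynomial k) • x)) := by
  simp [extend]

variable [CharZero k]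

theorem fixedProj_T_smul_of_mem (hw : IsCocycle m ζ hζ0 w) (hm : 0 < m)
    (hζ : IsPrimitiveRoot ζ m) (L : ↥(fixedSubmodule hw hζ.pow_eq_one) →ₗ[↥(Rsub k m)] 𝔤S)
    (j : ℤ) {b : 𝔤S} (hb : b ∈ fixedSubmodule hw hζ.pow_eq_one) :
    L (fixedProj hw hζ.pow_eq_one ((T j : LaurentPolynomial k) • b)) =
      if (m : ℤ) ∣ j then (T j : LaurentPolynomial k) • L ⟨b, hb⟩ else 0 := by
  split_ifs with hj
  · have h : fixedProj hw hζ.pow_eq_one ((T j : LaurentPolynomial k) • b) =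
        (⟨T j, T_mem_Rsub hj⟩ : ↥(Rsub k m)) • ⟨b, hb⟩ :=
      Subtype.ext ((average_T_smul_of_mem hw hm hζ j hb).trans (if_pos hj))
    rw [h, map_smul]
    rfl
  · have h : fixedProj hw hζ.pow_eq_one ((T j : LaurentPolynomial k) • b) = 0 :=
      Subtype.ext ((average_T_smul_of_mem hw hm hζ j hb).trans (if_neg hj))
    rw [h, map_zero]

theorem extend_T_smul_of_mem (hw : IsCocycle m ζ hζ0 w) (hm : 0 < m) (hζ : IsPrimitiveRoot ζ m)
    (L : ↥(fixedSubmodule hw hζ.pow_eq_one) →ₗ[↥(Rsub k m)] 𝔤S) (r : ℤ) {b : 𝔤S}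
    (hb : b ∈ fixedSubmodule hw hζ.pow_eq_one) :
    extend hw hζ.pow_eq_one L ((T r : LaurentPolynomial k) • b) =
      (T r : LaurentPolynomial k) • L ⟨b, hb⟩ := by
  rw [extend_apply, ← sum_range_ite_dvd_sub hm r ((T r : LaurentPolynomial k) • L ⟨b, hb⟩)]
  refine sum_congr rfl fun n _ => ?_
  rw [smul_smul, ← T_add, neg_add_eq_sub, fixedProj_T_smul_of_mem hw hm hζ L _ hb]
  split_ifs
  · rw [smul_smul, ← T_add, add_sub_cancel]
  · rw [smul_zero]

theorem extend_T_smul (hw : IsCocycle m ζ hζ0 w) (hm : 0 < m) (hζ : IsPrimitiveRoot ζ m)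
    (L : ↥(fixedSubmodule hw hζ.pow_eq_one) →ₗ[↥(Rsub k m)] 𝔤S) (n : ℤ) (x : 𝔤S) :
    extend hw hζ.pow_eq_one L ((T n : LaurentPolynomial k) • x) =
      (T n : LaurentPolynomial k) • extend hw hζ.pow_eq_one L x := by
  induction x using induction_on_fixedSubmodule hw hm hζ with
  | add x y hx hy => rw [smul_add, map_add, map_add, hx, hy, smul_add]
  | T_smul p b hb => rw [smul_smul, ← T_add, extend_T_smul_of_mem hw hm hζ L _ hb,
      extend_T_smul_of_mem hw hm hζ L _ hb, smul_smul, T_add]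

theorem extend_smul (hw : IsCocycle m ζ hζ0 w) (hm : 0 < m) (hζ : IsPrimitiveRoot ζ m)
    (L : ↥(fixedSubmodule hw hζ.pow_eq_one) →ₗ[↥(Rsub k m)] 𝔤S) (s : LaurentPolynomial k)
    (x : 𝔤S) : extend hw hζ.pow_eq_one L (s • x) = s • extend hw hζ.pow_eq_one L x := by
  induction s using LaurentPolynomial.induction_on' with
  | add p q hp hq => rw [add_smul, map_add, hp, hq, add_smul]
  | C_mul_T n a =>
    rw [← smul_eq_C_mul, smul_assoc, map_smul, extend_T_smul hw hm hζ, smul_assoc]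

theorem extend_extend (hu : IsCocycle m ζ hζ0 u) (hv : IsCocycle m ζ hζ0 v) (hm : 0 < m)
    (hζ : IsPrimitiveRoot ζ m)
    (e : ↥(fixedSubmodule hu hζ.pow_eq_one) ≃ₗ[↥(Rsub k m)] ↥(fixedSubmodule hv hζ.pow_eq_one))
    (x : 𝔤S) :
    extend hv hζ.pow_eq_one ((fixedSubmodule hu _).subtype ∘ₗ e.symm.toLinearMap)
      (extend hu hζ.pow_eq_one ((fixedSubmodule hv _).subtype ∘ₗ e.toLinearMap) x) = x := by
  induction x using induction_on_fixedSubmodule hu hm hζ with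
  | add x y hx hy => rw [map_add, map_add, hx, hy]
  | T_smul n b hb =>
    rw [extend_T_smul_of_mem hu hm hζ _ n hb, LinearMap.comp_apply, LinearEquiv.coe_coe,
      Submodule.subtype_apply, extend_T_smul_of_mem hv hm hζ _ n (e ⟨b, hb⟩).2]
    simp

end Extension

section ExtendEquiv

variable [CharZero k] {m : ℕ} {ζ : k} {hζ0 : ζ ≠ 0}
  {u v : ℤ → ((LaurentPolynomial k ⊗[k] g) ≃ₗ[k] (LaurentPolynomial k ⊗[k] g))}
  (hu : IsCocycle m ζ hζ0 u) (hv : IsCocycle m ζ hζ0 v) (hm : 0 < m) (hζ : IsPrimitiveRoot ζ m)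

def extendEquiv
    (e : ↥(fixedSubmodule hu hζ.pow_eq_one) ≃ₗ[↥(Rsub k m)] ↥(fixedSubmodule hv hζ.pow_eq_one)) :
    𝔤S ≃ₗ[k] 𝔤S :=
  LinearEquiv.ofLinearMap (extend hu _ ((fixedSubmodule hv _).subtype ∘ₗ e.toLinearMap))
    (extend hv _ ((fixedSubmodule hu _).subtype ∘ₗ e.symm.toLinearMap))
    (LinearMap.ext (extend_extend hv hu hm hζ e.symm))
    (LinearMap.ext (extend_extend hu hv hm hζ e))

variable
  (e : ↥(fixedSubmodule hu hζ.pow_eq_one) ≃ₗ[↥(Rsub k m)] ↥(fixedSubmodule hv hζ.pow_eq_one))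

theorem extendEquiv_T_smul_of_mem (n : ℤ) {b : 𝔤S}
    (hb : b ∈ fixedSubmodule hu hζ.pow_eq_one) :
    extendEquiv hu hv hm hζ e ((T n : LaurentPolynomial k) • b) =
      (T n : LaurentPolynomial k) • (e ⟨b, hb⟩ : 𝔤S) :=
  extend_T_smul_of_mem hu hm hζ _ n hb

theorem extendEquiv_theta (i : ℤ) (x : 𝔤S) :
    extendEquiv hu hv hm hζ e (theta ζ hζ0 u i x) =
      theta ζ hζ0 v i (extendEquiv hu hv hm hζ e x) := by
  induction x using induction_on_fixedSubmodule hu hm hζ with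
  | add x y hx hy => simp only [map_add, hx, hy]
  | T_smul n b hb =>
    rw [hu.theta_T_smul, mem_fixedSubmodule_iff.mp hb, map_smul, extendEquiv_T_smul_of_mem,
      hv.theta_T_smul, mem_fixedSubmodule_iff.mp (e ⟨b, hb⟩).2]

theorem extendEquiv_lie
    (he : ∀ x y z : ↥(fixedSubmodule hu hζ.pow_eq_one), (z : 𝔤S) = ⁅(x : 𝔤S), (y : 𝔤S)⁆ →
      (e z : 𝔤S) = ⁅(e x : 𝔤S), (e y : 𝔤S)⁆) (x y : 𝔤S) :
    extendEquiv hu hv hm hζ e ⁅x, y⁆ =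
      ⁅extendEquiv hu hv hm hζ e x, extendEquiv hu hv hm hζ e y⁆ := by
  induction x using induction_on_fixedSubmodule hu hm hζ with
  | add x x' hx hx' => rw [tensor_add_lie, map_add, hx, hx', map_add, tensor_add_lie]
  | T_smul n b hb =>
    induction y using induction_on_fixedSubmodule hu hm hζ with
    | add y y' hy hy' => rw [tensor_lie_add, map_add, hy, hy', map_add, tensor_lie_add]
    | T_smul p c hc =>
      have hbc := lie_mem_fixedSubmodule hu hζ.pow_eq_one hb hc
      rw [tensor_smul_lie_smul, ← T_add, extendEquiv_T_smul_of_mem hu hv hm hζ e _ hbc,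
        extendEquiv_T_smul_of_mem hu hv hm hζ e _ hb,
        extendEquiv_T_smul_of_mem hu hv hm hζ e _ hc, tensor_smul_lie_smul, T_add,
        he ⟨b, hb⟩ ⟨c, hc⟩ ⟨_, hbc⟩ rfl]

theorem isSAut_extendEquiv
    (he : ∀ x y z : ↥(fixedSubmodule hu hζ.pow_eq_one), (z : 𝔤S) = ⁅(x : 𝔤S), (y : 𝔤S)⁆ →
      (e z : 𝔤S) = ⁅(e x : 𝔤S), (e y : 𝔤S)⁆) :
    IsSAut (extendEquiv hu hv hm hζ e) :=
  ⟨extend_smul hu hm hζ _, extendEquiv_lie hu hv hm hζ e he⟩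

end ExtendEquiv

theorem IsSAut.symm {f : 𝔤S ≃ₗ[k] 𝔤S} (hf : IsSAut f) : IsSAut f.symm :=
  ⟨fun s x => f.injective (by rw [hf.1, f.apply_symm_apply, f.apply_symm_apply]),
    fun x y => f.injective (by
      rw [hf.2, f.apply_symm_apply, f.apply_symm_apply, f.apply_symm_apply])⟩

def fixedSubmoduleEquiv {m : ℕ} {ζ : k} {hζ0 : ζ ≠ 0} {u v : ℤ → (𝔤S ≃ₗ[k] 𝔤S)}
    (hu : IsCocycle m ζ hζ0 u) (hv : IsCocycle m ζ hζ0 v) (hζm : ζ ^ m = 1)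
    (f : 𝔤S ≃ₗ[k] 𝔤S) (hf : ∀ (s : LaurentPolynomial k) x, f (s • x) = s • f x)
    (hfθ : ∀ i x, f (theta ζ hζ0 v i x) = theta ζ hζ0 u i (f x)) :
    ↥(fixedSubmodule hv hζm) ≃ₗ[↥(Rsub k m)] ↥(fixedSubmodule hu hζm) where
  toFun y := ⟨f (y : 𝔤S), fun i => by
    rw [← theta_apply, ← hfθ, mem_fixedSubmodule_iff.mp y.2 i]⟩
  invFun x := ⟨f.symm (x : 𝔤S), fun i => f.injective (by
    rw [← theta_apply, hfθ, f.apply_symm_apply, mem_fixedSubmodule_iff.mp x.2 i])⟩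
  map_add' y y' := Subtype.ext (map_add f (y : 𝔤S) y')
  map_smul' r y := Subtype.ext (hf r (y : 𝔤S))
  left_inv y := Subtype.ext (f.symm_apply_apply (y : 𝔤S))
  right_inv x := Subtype.ext (f.apply_symm_apply (x : 𝔤S))

/-- For 1-cocycles `u, v` on `Γ` in `Aut_S(g(S))`, the fixed point
algebras `g(S)_u` and `g(S)_v` are isomorphic as Lie algebras over `R` if and only if
`u` and `v` are cohomologous, i.e. there is `f ∈ Aut_S(g(S))` with
`v_ī = f⁻¹ ∘ u_ī ∘ ⁱf` for all `ī ∈ Γ`. -/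
theorem statement8 {k : Type*} [Field k] [CharZero k] {g : Type*} [LieRing g] [LieAlgebra k g]
    (m : ℕ) (hm : 0 < m) (ζ : k) (hζ : IsPrimitiveRoot ζ m)
    (u v : ℤ → ((LaurentPolynomial k ⊗[k] g) ≃ₗ[k] (LaurentPolynomial k ⊗[k] g)))
    (hu : IsCocycle m ζ (hζ.ne_zero hm.ne') u)
    (hv : IsCocycle m ζ (hζ.ne_zero hm.ne') v) :
    (∃ (F₁ F₂ : Submodule ↥(Rsub k m) (LaurentPolynomial k ⊗[k] g)),
      (F₁ : Set (LaurentPolynomial k ⊗[k] g)) = cocycleFixed ζ (hζ.ne_zero hm.ne') u ∧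
      (F₂ : Set (LaurentPolynomial k ⊗[k] g)) = cocycleFixed ζ (hζ.ne_zero hm.ne') v ∧
      ∃ e : ↥F₁ ≃ₗ[↥(Rsub k m)] ↥F₂,
        ∀ x y z : ↥F₁,
          (z : LaurentPolynomial k ⊗[k] g)
              = ⁅(x : LaurentPolynomial k ⊗[k] g), (y : LaurentPolynomial k ⊗[k] g)⁆ →
            (e z : LaurentPolynomial k ⊗[k] g)
              = ⁅(e x : LaurentPolynomial k ⊗[k] g), (e y : LaurentPolynomial k ⊗[k] g)⁆)
    ↔ ∃ f : (LaurentPolynomial k ⊗[k] g) ≃ₗ[k] (LaurentPolynomial k ⊗[k] g),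
        IsSAut f ∧
        ∀ i : ℤ,
          v i = ((gammaAct ζ (hζ.ne_zero hm.ne') i f).trans (u i)).trans f.symm := by
  simp only [eq_conj_gammaAct_iff]
  constructor
  · rintro ⟨F₁, F₂, hF₁, hF₂, e, he⟩
    obtain rfl : F₁ = fixedSubmodule hu hζ.pow_eq_one := SetLike.coe_injective hF₁
    obtain rfl : F₂ = fixedSubmodule hv hζ.pow_eq_one := SetLike.coe_injective hF₂
    set E := extendEquiv hu hv hm hζ e
    refine ⟨E.symm, (isSAut_extendEquiv hu hv hm hζ e he).symm, fun i x => E.injective ?_⟩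
    rw [E.apply_symm_apply, extendEquiv_theta, E.apply_symm_apply]
  · rintro ⟨f, hf, hfθ⟩
    refine ⟨fixedSubmodule hu hζ.pow_eq_one, fixedSubmodule hv hζ.pow_eq_one, rfl, rfl,
      (fixedSubmoduleEquiv hu hv hζ.pow_eq_one f hf.1 hfθ).symm, fun x y z hz => ?_⟩
    exact (congrArg f.symm hz).trans (hf.symm.2 x y)

end LoopPaper
end
end

section
/- The derived algebra of the loop algebra L(g,σ) equals the loop algebra of the derived algebra: [L(g,σ), L(g,σ)] = L(g', σ|_{g'}) as R-subalgebras of g(S), where g' := [g,g] is the derived algebra of g (which is stable under σ, and σ|_{g'} satisfies (σ|_{g'})^m = id). -/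
open scoped TensorProduct
open LaurentPolynomial

set_option maxHeartbeats 1000000
set_option synthInstance.maxHeartbeats 400000

noncomputable section

namespace LoopPaper

variable {k : Type*} [Field k] {g : Type*} [LieRing g] [LieAlgebra k g]

/-!
Since `σ ^ m = 1` and `m` is invertible in `k`, the averages `P_μ = m⁻¹ ∑_{r < m} μ⁻ʳ σʳ` over
the `m`-th roots of unity `μ = ζʲ` are the projections onto the eigenspaces of `σ`; in particular
`g` is spanned by eigenvectors. As `[zⁱ ⊗ a, zʲ ⊗ b] = zⁱ⁺ʲ ⊗ [a, b]`, brackets in `L(g, σ)` land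
in `L(g', σ)`. Conversely an `x ∈ g'` of weight `ζⁱ` equals `P_{ζⁱ} x`, so by bilinearity it
suffices to treat `P_{ζⁱ} [u, v]` for eigenvectors `u, v` of weights `ζʲ, ζˡ`: this vanishes
unless `ζʲ⁺ˡ = ζⁱ`, and then `zⁱ ⊗ [u, v] = [zʲ ⊗ u, zⁱ⁻ʲ ⊗ v]`.
-/

theorem _root_.IsPrimitiveRoot.natCast_ne_zero {R : Type*} [CommRing R] [IsDomain R] {ζ : R}
    {m : ℕ} (hζ : IsPrimitiveRoot ζ m) (hm : m ≠ 0) : (m : R) ≠ 0 :=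
  haveI : NeZero m := ⟨hm⟩
  hζ.neZero'.out

theorem _root_.zpow_pow_eq_one_of_pow_eq_one {G : Type*} [DivisionMonoid G] {ζ : G} {m : ℕ}
    (h : ζ ^ m = 1) (n : ℤ) : (ζ ^ n) ^ m = 1 := by
  rw [← zpow_natCast, ← zpow_mul, mul_comm, zpow_mul, zpow_natCast, h, one_zpow]

theorem _root_.Submodule.apply_mem_of_mem_span₂ {R M N P : Type*} [CommSemiring R]
    [AddCommMonoid M] [AddCommMonoid N] [AddCommMonoid P] [Module R M] [Module R N] [Module R P]
    (f : M →ₗ[R] N →ₗ[R] P) {s : Set M} {t : Set N} {D : Submodule R P}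
    (h : ∀ x ∈ s, ∀ y ∈ t, f x y ∈ D) {x : M} {y : N} (hx : x ∈ Submodule.span R s)
    (hy : y ∈ Submodule.span R t) : f x y ∈ D := by
  have hle : Submodule.map₂ f (Submodule.span R s) (Submodule.span R t) ≤ D := by
    rw [Submodule.map₂_span_span, Submodule.span_le]
    rintro _ ⟨x, hx, y, hy, rfl⟩
    exact h x hx y hy
  exact Submodule.map₂_le.mp hle x hx y hy

theorem _root_.lie_mem_of_mem_span {R L : Type*} [CommRing R] [LieRing L] [LieAlgebra R L]
    {s t : Set L} {D : Submodule R L} (h : ∀ x ∈ s, ∀ y ∈ t, ⁅x, y⁆ ∈ D) {x y : L}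
    (hx : x ∈ Submodule.span R s) (hy : y ∈ Submodule.span R t) : ⁅x, y⁆ ∈ D :=
  Submodule.apply_mem_of_mem_span₂ (LieModule.toEnd R L L : L →ₗ[R] Module.End R L) h hx hy

section EigenProjection

variable {V : Type*} [AddCommGroup V] [Module k V]

theorem _root_.LinearEquiv.pow_apply_of_apply_eq_smul {σ : V ≃ₗ[k] V} {c : k} {x : V}
    (hx : σ x = c • x) (r : ℕ) : (σ ^ r) x = c ^ r • x := by
  induction r with
  | zero => simp
  | succ r ih => rw [pow_succ', LinearEquiv.mul_apply, ih, map_smul, hx, smul_smul, pow_succ]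

def eigenProj (σ : V ≃ₗ[k] V) (m : ℕ) (μ : k) : V →ₗ[k] V :=
  (m : k)⁻¹ • ∑ r ∈ Finset.range m, μ⁻¹ ^ r • ((σ ^ r : V ≃ₗ[k] V) : V →ₗ[k] V)

theorem eigenProj_apply (σ : V ≃ₗ[k] V) (m : ℕ) (μ : k) (x : V) :
    eigenProj σ m μ x = (m : k)⁻¹ • ∑ r ∈ Finset.range m, μ⁻¹ ^ r • (σ ^ r) x := by
  simp [eigenProj]

theorem eigenProj_apply_of_apply_eq_smul {σ : V ≃ₗ[k] V} {m : ℕ} (hm : (m : k) ≠ 0) {μ : k}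
    (hμ : μ ≠ 0) {x : V} (hx : σ x = μ • x) : eigenProj σ m μ x = x := by
  have hterm : ∀ r ∈ Finset.range m, μ⁻¹ ^ r • (σ ^ r) x = x := fun r _ => by
    rw [LinearEquiv.pow_apply_of_apply_eq_smul hx, smul_smul, ← mul_pow, inv_mul_cancel₀ hμ,
      one_pow, one_smul]
  rw [eigenProj_apply, Finset.sum_congr rfl hterm, Finset.sum_const, Finset.card_range,
    ← Nat.cast_smul_eq_nsmul k, smul_smul, inv_mul_cancel₀ hm, one_smul]

theorem eigenProj_apply_of_apply_eq_smul_of_ne {σ : V ≃ₗ[k] V} {m : ℕ} {μ ν : k}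
    (hμ : μ ^ m = 1) (hν : ν ^ m = 1) (hne : ν ≠ μ) {x : V} (hx : σ x = ν • x) :
    eigenProj σ m μ x = 0 := by
  have hterm : ∀ r ∈ Finset.range m, μ⁻¹ ^ r • (σ ^ r) x = (μ⁻¹ * ν) ^ r • x := fun r _ => by
    rw [LinearEquiv.pow_apply_of_apply_eq_smul hx, smul_smul, ← mul_pow]
  have hratio : μ⁻¹ * ν ≠ 1 := by
    rcases eq_or_ne μ 0 with rfl | hμ0
    · simp
    · rwa [Ne, inv_mul_eq_one₀ hμ0, eq_comm]
  rw [eigenProj_apply, Finset.sum_congr rfl hterm, ← Finset.sum_smul, geom_sum_eq hratio,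
    mul_pow, inv_pow, hμ, hν, inv_one, one_mul, sub_self, zero_div, zero_smul, smul_zero]

theorem apply_eigenProj {σ : V ≃ₗ[k] V} {m : ℕ} (hσ : σ ^ m = 1) {μ : k} (hμ : μ ^ m = 1)
    (x : V) : σ (eigenProj σ m μ x) = μ • eigenProj σ m μ x := by
  obtain rfl | hm := eq_or_ne m 0
  · simp [eigenProj]
  have hμ0 : μ ≠ 0 := by
    rintro rfl
    exact zero_ne_one ((zero_pow hm).symm.trans hμ)
  let f : ℕ → V := fun r => μ⁻¹ ^ r • (σ ^ r) x
  have hshift : ∀ r, σ (f r) = μ • f (r + 1) := fun r => by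
    simp only [f]
    rw [map_smul, pow_succ' σ, LinearEquiv.mul_apply, smul_smul, pow_succ', ← mul_assoc,
      mul_inv_cancel₀ hμ0, one_mul]
  have hperiodic : f m = f 0 := by
    simp only [f, hσ, inv_pow, hμ, inv_one, one_smul, pow_zero, LinearEquiv.coe_one, id_eq]
  have hsum : ∑ r ∈ Finset.range m, f (r + 1) = ∑ r ∈ Finset.range m, f r := by
    have htelescope := Finset.sum_range_sub f m
    rwa [hperiodic, sub_self, Finset.sum_sub_distrib, sub_eq_zero] at htelescope
  rw [eigenProj_apply, map_smul, map_sum, Finset.sum_congr rfl fun r _ => hshift r,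
    ← Finset.smul_sum, hsum, smul_comm]

theorem sum_eigenProj_pow {ζ : k} {m : ℕ} (hζ : IsPrimitiveRoot ζ m) (hm : m ≠ 0)
    (σ : V ≃ₗ[k] V) (x : V) : ∑ j ∈ Finset.range m, eigenProj σ m (ζ ^ j) x = x := by
  have hvanish : ∀ r ∈ Finset.range m, r ≠ 0 →
      (∑ j ∈ Finset.range m, (ζ ^ j)⁻¹ ^ r) • (σ ^ r) x = 0 := by
    intro r hr hr0
    have hpow : ∀ j ∈ Finset.range m, (ζ ^ j)⁻¹ ^ r = (ζ ^ r)⁻¹ ^ j := fun j _ => by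
      rw [inv_pow, inv_pow, ← pow_mul, ← pow_mul, mul_comm]
    have hne : (ζ ^ r)⁻¹ ≠ 1 :=
      inv_ne_one.mpr (hζ.pow_ne_one_of_pos_of_lt hr0 (Finset.mem_range.mp hr))
    rw [Finset.sum_congr rfl hpow, geom_sum_eq hne, inv_pow, ← pow_mul, mul_comm, pow_mul,
      hζ.pow_eq_one, one_pow, inv_one, sub_self, zero_div, zero_smul]
  simp only [eigenProj_apply, ← Finset.smul_sum]
  rw [Finset.sum_comm]
  simp only [← Finset.sum_smul]
  rw [Finset.sum_eq_single_of_mem 0 (Finset.mem_range.mpr (Nat.pos_of_ne_zero hm)) hvanish]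
  simp only [pow_zero, Finset.sum_const, Finset.card_range, nsmul_eq_mul, mul_one,
    LinearEquiv.coe_one, id_eq]
  rw [smul_smul, inv_mul_cancel₀ (hζ.natCast_ne_zero hm), one_smul]

theorem span_setOf_apply_eq_zpow_smul_eq_top {ζ : k} {m : ℕ} (hζ : IsPrimitiveRoot ζ m)
    (hm : m ≠ 0) {σ : V ≃ₗ[k] V} (hσ : σ ^ m = 1) :
    Submodule.span k {u | ∃ j : ℤ, σ u = ζ ^ j • u} = ⊤ := by
  refine Submodule.eq_top_iff'.mpr fun x => ?_
  rw [← sum_eigenProj_pow hζ hm σ x]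
  refine Submodule.sum_mem _ fun j _ => Submodule.subset_span ⟨j, ?_⟩
  rw [zpow_natCast]
  exact apply_eigenProj hσ (by rw [pow_right_comm, hζ.pow_eq_one, one_pow]) x

end EigenProjection

theorem IsLieAut.apply_lie_eq_smul {σ : g ≃ₗ[k] g} (hbr : IsLieAut σ) {a b : k} {u v : g}
    (hu : σ u = a • u) (hv : σ v = b • v) : σ ⁅u, v⁆ = (a * b) • ⁅u, v⁆ := by
  rw [hbr, hu, hv, smul_lie, lie_smul, smul_smul]

theorem lie_T_tmul_T_tmul (i j : ℤ) (a b : g) :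
    ⁅(T i : LaurentPolynomial k) ⊗ₜ[k] a, (T j : LaurentPolynomial k) ⊗ₜ[k] b⁆ =
      (T (i + j) : LaurentPolynomial k) ⊗ₜ[k] ⁅a, b⁆ := by
  rw [LieAlgebra.ExtendScalars.bracket_tmul, ← T_add]

theorem T_tmul_mem_loopCarrier {ζ : k} {σ : g ≃ₗ[k] g} {i : ℤ} {x : g} (hx : σ x = ζ ^ i • x) :
    T i ⊗ₜ[k] x ∈ loopCarrier ζ σ :=
  Submodule.subset_span ⟨i, x, hx, rfl⟩

/-- `L(g', σ|_{g'})`, viewed inside `g(S)`. -/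
def loopCarrierDerived (ζ : k) (σ : g ≃ₗ[k] g) : Submodule k (LaurentPolynomial k ⊗[k] g) :=
  Submodule.span k {p | ∃ (i : ℤ) (x : g),
    x ∈ Submodule.span k {w : g | ∃ a b : g, ⁅a, b⁆ = w} ∧ σ x = ζ ^ i • x ∧ p = T i ⊗ₜ[k] x}

theorem lie_mem_loopCarrierDerived {ζ : k} (hζ0 : ζ ≠ 0) {σ : g ≃ₗ[k] g} (hbr : IsLieAut σ)
    {x y : LaurentPolynomial k ⊗[k] g} (hx : x ∈ loopCarrier ζ σ) (hy : y ∈ loopCarrier ζ σ) :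
    ⁅x, y⁆ ∈ loopCarrierDerived ζ σ := by
  refine lie_mem_of_mem_span ?_ hx hy
  rintro _ ⟨i, a, ha, rfl⟩ _ ⟨j, b, hb, rfl⟩
  rw [lie_T_tmul_T_tmul]
  refine Submodule.subset_span ⟨i + j, ⁅a, b⁆, Submodule.subset_span ⟨a, b, rfl⟩, ?_, rfl⟩
  rw [hbr.apply_lie_eq_smul ha hb, zpow_add₀ hζ0]

theorem T_tmul_eigenProj_lie_mem_span {ζ : k} {m : ℕ} (hζ : IsPrimitiveRoot ζ m) (hm : m ≠ 0)
    {σ : g ≃ₗ[k] g} (hbr : IsLieAut σ) (i : ℤ) {j l : ℤ} {u v : g} (hu : σ u = ζ ^ j • u)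
    (hv : σ v = ζ ^ l • v) :
    T i ⊗ₜ[k] eigenProj σ m (ζ ^ i) ⁅u, v⁆ ∈ Submodule.span k
      {w | ∃ x, x ∈ loopCarrier ζ σ ∧ ∃ y, y ∈ loopCarrier ζ σ ∧ ⁅x, y⁆ = w} := by
  have hζ0 : ζ ≠ 0 := hζ.ne_zero hm
  have huv : σ ⁅u, v⁆ = ζ ^ (j + l) • ⁅u, v⁆ := by
    rw [hbr.apply_lie_eq_smul hu hv, zpow_add₀ hζ0]
  by_cases hdeg : ζ ^ (j + l) = ζ ^ i
  · rw [eigenProj_apply_of_apply_eq_smul (hζ.natCast_ne_zero hm) (zpow_ne_zero i hζ0)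
      (hdeg ▸ huv)]
    have hv' : σ v = ζ ^ (i - j) • v := by
      rw [hv, zpow_sub₀ hζ0, ← hdeg, zpow_add₀ hζ0, mul_div_cancel_left₀ _ (zpow_ne_zero j hζ0)]
    refine Submodule.subset_span ⟨_, T_tmul_mem_loopCarrier hu, _, T_tmul_mem_loopCarrier hv', ?_⟩
    rw [lie_T_tmul_T_tmul, add_sub_cancel]
  · rw [eigenProj_apply_of_apply_eq_smul_of_ne (zpow_pow_eq_one_of_pow_eq_one hζ.pow_eq_one i)
      (zpow_pow_eq_one_of_pow_eq_one hζ.pow_eq_one (j + l)) hdeg huv, TensorProduct.tmul_zero]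
    exact zero_mem _

theorem loopCarrierDerived_le_span_lie {ζ : k} {m : ℕ} (hζ : IsPrimitiveRoot ζ m) (hm : m ≠ 0)
    {σ : g ≃ₗ[k] g} (hbr : IsLieAut σ) (hσ : σ ^ m = 1) :
    loopCarrierDerived ζ σ ≤ Submodule.span k
      {w | ∃ x, x ∈ loopCarrier ζ σ ∧ ∃ y, y ∈ loopCarrier ζ σ ∧ ⁅x, y⁆ = w} := by
  set D := Submodule.span k
    {w | ∃ x, x ∈ loopCarrier ζ σ ∧ ∃ y, y ∈ loopCarrier ζ σ ∧ ⁅x, y⁆ = w}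
  rw [loopCarrierDerived, Submodule.span_le]
  rintro _ ⟨i, x, hx, hσx, rfl⟩
  let F : g →ₗ[k] LaurentPolynomial k ⊗[k] g :=
    TensorProduct.mk k (LaurentPolynomial k) g (T i) ∘ₗ eigenProj σ m (ζ ^ i)
  have hderived : Submodule.span k {w : g | ∃ a b : g, ⁅a, b⁆ = w} ≤ D.comap F := by
    rw [Submodule.span_le]
    rintro _ ⟨a, b, rfl⟩
    have heigen := span_setOf_apply_eq_zpow_smul_eq_top hζ hm hσ
    refine lie_mem_of_mem_span (D := D.comap F) ?_ (heigen ▸ Submodule.mem_top)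
      (heigen ▸ Submodule.mem_top)
    rintro u ⟨j, hu⟩ v ⟨l, hv⟩
    exact T_tmul_eigenProj_lie_mem_span hζ hm hbr i hu hv
  have hFx : F x = T i ⊗ₜ[k] x := by
    simp only [F, LinearMap.comp_apply, TensorProduct.mk_apply, eigenProj_apply_of_apply_eq_smul
      (hζ.natCast_ne_zero hm) (zpow_ne_zero i (hζ.ne_zero hm)) hσx]
  exact hFx ▸ hderived hx

theorem statement12_general {k : Type*} [Field k] {g : Type*} [LieRing g] [LieAlgebra k g]
    (m : ℕ) (hm : 0 < m) (ζ : k) (hζ : IsPrimitiveRoot ζ m)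
    (σ : g ≃ₗ[k] g) (hbr : IsLieAut σ) (hσ : σ ^ m = 1) :
    Submodule.span k {w : LaurentPolynomial k ⊗[k] g |
        ∃ x, x ∈ loopAlgebra m ζ (hζ.ne_zero hm.ne') hζ.pow_eq_one σ hbr hσ ∧
        ∃ y, y ∈ loopAlgebra m ζ (hζ.ne_zero hm.ne') hζ.pow_eq_one σ hbr hσ ∧
          ⁅x, y⁆ = w}
      = Submodule.span k {p : LaurentPolynomial k ⊗[k] g |
          ∃ (i : ℤ) (x : g),
            x ∈ Submodule.span k {w : g | ∃ a b : g, ⁅a, b⁆ = w} ∧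
            σ x = ζ ^ i • x ∧ p = T i ⊗ₜ[k] x} := by
  refine le_antisymm ?_ (loopCarrierDerived_le_span_lie hζ hm.ne' hbr hσ)
  rw [Submodule.span_le]
  rintro _ ⟨x, hx, y, hy, rfl⟩
  exact lie_mem_loopCarrierDerived (hζ.ne_zero hm.ne') hbr hx hy

/-- The derived algebra of the loop algebra equals the loop algebra
of the derived algebra: `[L(g,σ), L(g,σ)] = L(g', σ|_{g'})` inside `g(S)`, where
`g' = [g,g]`. -/
theorem statement12 {k : Type*} [Field k] [CharZero k] {g : Type*} [LieRing g] [LieAlgebra k g]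
    (m : ℕ) (hm : 0 < m) (ζ : k) (hζ : IsPrimitiveRoot ζ m)
    (σ : g ≃ₗ[k] g) (hbr : IsLieAut σ) (hσ : σ ^ m = 1) :
    Submodule.span k {w : LaurentPolynomial k ⊗[k] g |
        ∃ x, x ∈ loopAlgebra m ζ (hζ.ne_zero hm.ne') hζ.pow_eq_one σ hbr hσ ∧
        ∃ y, y ∈ loopAlgebra m ζ (hζ.ne_zero hm.ne') hζ.pow_eq_one σ hbr hσ ∧
          ⁅x, y⁆ = w}
      = Submodule.span k {p : LaurentPolynomial k ⊗[k] g |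
          ∃ (i : ℤ) (x : g),
            x ∈ Submodule.span k {w : g | ∃ a b : g, ⁅a, b⁆ = w} ∧
            σ x = ζ ^ i • x ∧ p = T i ⊗ₜ[k] x} :=
  statement12_general m hm ζ hζ σ hbr hσ

end LoopPaper
end
end

section
/- Let Q be a free abelian group and let g = ⊕_{α∈Q} g_α be a Q-graded Lie algebra over k (so [g_α, g_β] ⊆ g_{α+β} for all α, β ∈ Q) such that Q is generated as a group by the support {α ∈ Q : g_α ≠ 0}. Suppose τ and ρ are k-algebra automorphisms of g satisfying: (i) τ^m = ρ^m = id and τρ = ρτ; (ii) there exists a group homomorphism r : Q → k^× with ρ(x) = r(α)·x for all x ∈ g_α and α ∈ Q; (iii) there exists a group automorphism τ̂ of Q with τ(g_α) = g_{τ̂(α)} for all α ∈ Q. Let d ≥ 1 be an integer with τ̂^d = id, let ξ ∈ k be a primitive dm-th root of unity with ξ^d = ζ, let S' = k[z,z⁻¹], and let ι be the k-algebra automorphism of S' with ι(z) = ξ·z. Then there exists an S'-algebra automorphism φ of g ⊗_k S' such that φ ∘ (τ ⊗ ι⁻¹) ∘ φ⁻¹ = (τρ) ⊗ ι⁻¹;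 consequently the fixed-point subalgebras of τ ⊗ ι⁻¹ and of (τρ) ⊗ ι⁻¹ in g ⊗_k S' are isomorphic as Lie algebras over k[z^{dm}, z^{-dm}]. -/
/-!
The conjugating automorphism `φ` is diagonal for the grading: it multiplies `S' ⊗ g_α` by a unit
`f α` of `S' = k[z, z⁻¹]`. It preserves brackets when `f` is multiplicative, and it conjugates
`τ ⊗ ι⁻¹` into `τρ ⊗ ι⁻¹` as soon as `f (τ̂ α) = ι⁻¹ (f α) · r α`.

Since `ρ^m = 1` and the support generates `Q`, `r` takes values in the `m`-th roots of unity, so,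
`Q` being free, `r α = ζ^(s α)` for an additive `s : Q → ℤ`. The units `u_j = ξ^j z` satisfy
`ι⁻¹ u_j = u_(j-1)`, and `f α = ∏_{j<d} u_j^(s (τ̂^j α))` works: because `τ̂^d = id` the quotient
`f (τ̂ α) / ι⁻¹ (f α)` telescopes to `(u_(d-1) / u_(-1))^(s α) = ξ^(d s α) = ζ^(s α) = r α`.
-/

open scoped TensorProduct
open LaurentPolynomial

set_option maxHeartbeats 1000000
set_option synthInstance.maxHeartbeats 400000

noncomputable section

namespace LoopPaper

variable {k : Type*} [Field k] {g : Type*} [LieRing g] [LieAlgebra k g]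

section GradedDiag

variable {R A M : Type*} [CommRing R] [CommRing A] [Algebra R A] [AddCommGroup M] [Module R M]
  {Q : Type*} {G : Q → Submodule R M}

theorem tensor_induction_on_homogeneous (hG : iSup G = ⊤) {P : A ⊗[R] M → Prop}
    (zero : P 0) (add : ∀ x y, P x → P y → P (x + y))
    (tmul : ∀ α (p : A), ∀ x ∈ G α, P (p ⊗ₜ x)) (z : A ⊗[R] M) : P z := by
  induction z using TensorProduct.induction_on with
  | zero => exact zero
  | add x y hx hy => exact add x y hx hy
  | tmul p x =>
    have hx : x ∈ iSup G := hG ▸ Submodule.mem_top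
    refine Submodule.iSup_induction G (motive := fun x => P (p ⊗ₜ x)) hx (tmul · p) ?_ ?_
    · simpa using zero
    · intro x y hx hy
      simpa [TensorProduct.tmul_add] using add _ _ hx hy

variable [DecidableEq Q]

def gradedDiag (hG : DirectSum.IsInternal G) (f : Q → A) : A ⊗[R] M →ₗ[A] A ⊗[R] M :=
  LinearMap.liftBaseChange A
    (DirectSum.toModule R Q _ (fun α => (TensorProduct.mk R A M (f α)).comp (G α).subtype) ∘ₗ
      (LinearEquiv.ofBijective (DirectSum.coeLinearMap G) hG).symm.toLinearMap)

theorem gradedDiag_tmul (hG : DirectSum.IsInternal G) (f : Q → A) {α : Q} {x : M}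
    (hx : x ∈ G α) (p : A) : gradedDiag hG f (p ⊗ₜ x) = (p * f α) ⊗ₜ x := by
  have hdecomp : (LinearEquiv.ofBijective (DirectSum.coeLinearMap G) hG).symm x =
      DirectSum.lof R Q (fun α => G α) α ⟨x, hx⟩ := by
    rw [LinearEquiv.symm_apply_eq]
    exact (DirectSum.coeLinearMap_of G α ⟨x, hx⟩).symm
  rw [gradedDiag, LinearMap.liftBaseChange_tmul, LinearMap.comp_apply, LinearEquiv.coe_coe,
    hdecomp, DirectSum.toModule_lof, LinearMap.comp_apply, Submodule.subtype_apply,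
    TensorProduct.mk_apply, TensorProduct.smul_tmul', smul_eq_mul]

theorem gradedDiag_comp (hG : DirectSum.IsInternal G) (f₁ f₂ : Q → A) :
    gradedDiag hG f₁ ∘ₗ gradedDiag hG f₂ = gradedDiag hG (f₂ * f₁) := by
  refine LinearMap.ext fun z => ?_
  induction z using tensor_induction_on_homogeneous hG.submodule_iSup_eq_top with
  | zero => simp
  | add x y hx hy => simp only [map_add, hx, hy]
  | tmul α p x hx =>
    simp only [LinearMap.comp_apply, gradedDiag_tmul hG _ hx, Pi.mul_apply, mul_assoc]

theorem gradedDiag_one (hG : DirectSum.IsInternal G) : gradedDiag hG (1 : Q → A) = .id := by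
  refine LinearMap.ext fun z => ?_
  induction z using tensor_induction_on_homogeneous hG.submodule_iSup_eq_top with
  | zero => simp
  | add x y hx hy => simp only [map_add, hx, hy]
  | tmul α p x hx => rw [gradedDiag_tmul hG _ hx, Pi.one_apply, mul_one, LinearMap.id_apply]

def gradedDiagEquiv (hG : DirectSum.IsInternal G) (f : Q → Aˣ) : A ⊗[R] M ≃ₗ[A] A ⊗[R] M :=
  LinearEquiv.ofLinearMap (gradedDiag hG fun α => f α) (gradedDiag hG fun α => ↑(f α)⁻¹)
    (by rw [gradedDiag_comp, ← gradedDiag_one hG]; congr; ext; simp)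
    (by rw [gradedDiag_comp, ← gradedDiag_one hG]; congr; ext; simp)

theorem gradedDiagEquiv_tmul (hG : DirectSum.IsInternal G) (f : Q → Aˣ) {α : Q} {x : M}
    (hx : x ∈ G α) (p : A) : gradedDiagEquiv hG f (p ⊗ₜ x) = (p * f α) ⊗ₜ x :=
  gradedDiag_tmul hG _ hx p

theorem gradedDiagEquiv_congr_apply (hG : DirectSum.IsInternal G) (f : Q → Aˣ)
    (σ : A ≃ₐ[R] A) (τ ρ : M ≃ₗ[R] M) (τhat : Q → Q) (hτ : ∀ α, ∀ x ∈ G α, τ x ∈ G (τhat α))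
    (c : Q → R) (hρ : ∀ α, ∀ x ∈ G α, ρ x = c α • x)
    (hf : ∀ α, (f (τhat α) : A) = σ (f α) * algebraMap R A (c α)) (y : A ⊗[R] M) :
    gradedDiagEquiv hG f (TensorProduct.congr σ.toLinearEquiv τ y) =
      TensorProduct.congr σ.toLinearEquiv (τ * ρ) (gradedDiagEquiv hG f y) := by
  induction y using tensor_induction_on_homogeneous hG.submodule_iSup_eq_top with
  | zero => simp
  | add x y hx hy => simp only [map_add, hx, hy]
  | tmul α p x hx =>
    rw [TensorProduct.congr_tmul, gradedDiagEquiv_tmul hG f (hτ α x hx),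
      gradedDiagEquiv_tmul hG f hx, TensorProduct.congr_tmul, LinearEquiv.mul_apply, hρ α x hx,
      map_smul, ← TensorProduct.smul_tmul, hf]
    congr 1
    simp only [AlgEquiv.toLinearEquiv_apply, map_mul, Algebra.smul_def]
    ring

end GradedDiag

section GradedDiagLie

variable {R A L : Type*} [CommRing R] [CommRing A] [Algebra R A] [LieRing L] [LieAlgebra R L]
  {Q : Type*} [Add Q] [DecidableEq Q] {G : Q → Submodule R L}

theorem gradedDiagEquiv_lie (hG : DirectSum.IsInternal G)
    (hgraded : ∀ α β, ∀ x ∈ G α, ∀ y ∈ G β, ⁅x, y⁆ ∈ G (α + β))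
    (f : Q → Aˣ) (hf : ∀ α β, f (α + β) = f α * f β) (x y : A ⊗[R] L) :
    gradedDiagEquiv hG f ⁅x, y⁆ = ⁅gradedDiagEquiv hG f x, gradedDiagEquiv hG f y⁆ := by
  have htop := hG.submodule_iSup_eq_top
  induction x using tensor_induction_on_homogeneous htop with
  | zero => simp
  | add x x' hx hx' => simp only [add_lie, map_add, hx, hx']
  | tmul α p a ha =>
    induction y using tensor_induction_on_homogeneous htop with
    | zero => simp
    | add y y' hy hy' => simp only [lie_add, map_add, hy, hy']
    | tmul β q b hb =>
      rw [LieAlgebra.ExtendScalars.bracket_tmul, gradedDiagEquiv_tmul hG f (hgraded α β a ha b hb),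
        gradedDiagEquiv_tmul hG f ha, gradedDiagEquiv_tmul hG f hb,
        LieAlgebra.ExtendScalars.bracket_tmul, hf, Units.val_mul]
      congr 1
      ring

end GradedDiagLie

theorem map_ker_sub_id_eq_of_comm {R M N : Type*} [Ring R] [AddCommGroup M] [Module R M]
    [AddCommGroup N] [Module R N] (e : M ≃ₗ[R] N) (T : M ≃ₗ[R] M) (T' : N ≃ₗ[R] N)
    (h : ∀ y, e (T y) = T' (e y)) :
    (LinearMap.ker (T.toLinearMap - .id)).map e.toLinearMap =
      LinearMap.ker (T'.toLinearMap - .id) := by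
  ext z
  rw [Submodule.map_equiv_eq_comap_symm, Submodule.mem_comap, LinearMap.mem_ker,
    LinearMap.mem_ker]
  simp only [LinearMap.sub_apply, LinearEquiv.coe_coe, LinearMap.id_apply, sub_eq_zero]
  rw [← e.injective.eq_iff, h, e.apply_symm_apply]

theorem pow_eq_one_of_eigenvector {K V : Type*} [Field K] [AddCommGroup V] [Module K V]
    {ρ : V ≃ₗ[K] V} {m : ℕ} (hρ : ρ ^ m = 1) {c : K} {x : V} (hx : ρ x = c • x) (hx0 : x ≠ 0) :
    c ^ m = 1 := by
  have hpow : ∀ n : ℕ, (ρ ^ n) x = c ^ n • x := by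
    intro n
    induction n with
    | zero => simp
    | succ n ih => rw [pow_succ, LinearEquiv.mul_apply, hx, map_smul, ih, smul_smul, pow_succ']
  have h := hpow m
  rw [hρ, LinearEquiv.coe_one, id_eq] at h
  exact smul_left_injective K hx0 (h.symm.trans (one_smul K x).symm)

theorem pow_eq_one_of_closure_eq_top {Q M : Type*} [AddGroup Q] [CommGroup M] {r : Q → M}
    (hr : ∀ α β, r (α + β) = r α * r β) {S : Set Q} (hS : AddSubgroup.closure S = ⊤) {m : ℕ}
    (hm : ∀ α ∈ S, r α ^ m = 1) (α : Q) : r α ^ m = 1 := by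
  let χ : Q →+ Additive M :=
    AddMonoidHom.mk' (fun α => Additive.ofMul (r α ^ m)) fun α β => by simp [hr, mul_pow]
  have hle : AddSubgroup.closure S ≤ χ.ker :=
    (AddSubgroup.closure_le _).2 fun α hα => ofMul_eq_zero.2 (hm α hα)
  rw [hS] at hle
  exact ofMul_eq_zero.1 (hle (AddSubgroup.mem_top α))

theorem exists_addMonoidHom_zpow_eq {Q M : Type*} [AddCommGroup Q] [Module.Free ℤ Q]
    [CommGroup M] (Z : M) {r : Q → M} (hr : ∀ α β, r (α + β) = r α * r β)
    (hrZ : ∀ α, r α ∈ Subgroup.zpowers Z) : ∃ s : Q →+ ℤ, ∀ α, Z ^ s α = r α := by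
  let χ : Q →ₗ[ℤ] Additive M :=
    (AddMonoidHom.mk' (fun α => Additive.ofMul (r α)) fun α β => by simp [hr]).toIntLinearMap
  let ψ : ℤ →ₗ[ℤ] Additive M := (zmultiplesHom _ (Additive.ofMul Z)).toIntLinearMap
  have hrange : ∀ α, χ α ∈ LinearMap.range ψ := fun α => by
    obtain ⟨n, hn⟩ := Subgroup.mem_zpowers_iff.1 (hrZ α)
    exact ⟨n, by simp [χ, ψ, ← hn]⟩
  obtain ⟨s, hs⟩ := Module.projective_lifting_property ψ.rangeRestrict (χ.codRestrict _ hrange)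
    ψ.surjective_rangeRestrict
  refine ⟨s.toAddMonoidHom, fun α => ?_⟩
  exact congrArg (fun φ => Additive.toMul ((φ α : LinearMap.range ψ) : Additive M)) hs

theorem prod_zpow_succ_eq_map_mul {M : Type*} [CommGroup M] (σ : M →* M) {u : ℤ → M}
    (hu : ∀ j, σ (u j) = u (j - 1)) (e : ℕ → ℤ) {d : ℕ} (he : e d = e 0) :
    ∏ j ∈ Finset.range d, u j ^ e (j + 1) =
      σ (∏ j ∈ Finset.range d, u j ^ e j) * (u (d - 1) / u (-1)) ^ e 0 := by
  have hσ : σ (∏ j ∈ Finset.range d, u j ^ e j) = ∏ j ∈ Finset.range d, u (j - 1) ^ e j := by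
    simp [map_prod, map_zpow, hu]
  have htele := (Finset.prod_range_succ' (fun j : ℕ => u (j - 1) ^ e j) d).symm.trans
    (Finset.prod_range_succ (fun j : ℕ => u (j - 1) ^ e j) d)
  simp only [Nat.cast_add, Nat.cast_one, add_sub_cancel_right, Nat.cast_zero, zero_sub, he]
    at htele
  rw [hσ, div_zpow, ← mul_div_assoc, ← htele, mul_div_cancel_right]

section OrbitProd

variable {M Q : Type*} [CommGroup M]

def orbitProd (u : ℤ → M) (s : Q → ℤ) (θ : Q → Q) (d : ℕ) (α : Q) : M :=
  ∏ j ∈ Finset.range d, u j ^ s (θ^[j] α)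

theorem orbitProd_add [AddMonoid Q] (u : ℤ → M) (s : Q →+ ℤ) (θ : Q →+ Q) (d : ℕ)
    (α β : Q) : orbitProd u s θ d (α + β) = orbitProd u s θ d α * orbitProd u s θ d β := by
  simp only [orbitProd, iterate_map_add, map_add, zpow_add, Finset.prod_mul_distrib]

theorem orbitProd_apply_of_iterate_eq (σ : M →* M) {u : ℤ → M}
    (hu : ∀ j, σ (u j) = u (j - 1)) (s : Q → ℤ) (θ : Q → Q) {d : ℕ} {α : Q}
    (hα : θ^[d] α = α) :
    orbitProd u s θ d (θ α) = σ (orbitProd u s θ d α) * (u (d - 1) / u (-1)) ^ s α := by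
  simp only [orbitProd, ← Function.iterate_succ_apply]
  exact prod_zpow_succ_eq_map_mul σ hu (fun j => s (θ^[j] α)) (by simp only [hα]; rfl)

end OrbitProd

def scaledVarUnit (c : kˣ) (j : ℤ) : (LaurentPolynomial k)ˣ :=
  Units.map (algebraMap k (LaurentPolynomial k)) (c ^ j) * (isUnit_T 1).unit

theorem map_scaleVarEquiv_symm_scaledVarUnit (c : kˣ) (j : ℤ) :
    Units.map ((scaleVarEquiv c).symm : LaurentPolynomial k →* LaurentPolynomial k)
      (scaledVarUnit c j) = scaledVarUnit c (j - 1) := by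
  refine Units.ext ?_
  have hsymm : ∀ p, (scaleVarEquiv c).symm p = scaleVar c⁻¹ p := fun _ => rfl
  simp only [scaledVarUnit, Units.coe_map, Units.val_mul, MonoidHom.coe_coe, map_mul, hsymm,
    AlgHom.commutes, IsUnit.unit_spec, scaleVar_T, zpow_one, zpow_sub_one, Units.val_mul,
    map_mul, Algebra.smul_def, mul_assoc]

theorem scaledVarUnit_div (c : kˣ) (i j : ℤ) :
    scaledVarUnit c j / scaledVarUnit c i =
      Units.map (algebraMap k (LaurentPolynomial k)) (c ^ (j - i)) := by
  rw [scaledVarUnit, scaledVarUnit, mul_div_mul_right_eq_div, zpow_sub, map_mul, map_inv,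
    div_eq_mul_inv]

theorem statement19_general {k : Type*} [Field k] {g : Type*} [LieRing g] [LieAlgebra k g]
    (m : ℕ) (hm : 0 < m) (ζ : k) (hζ : IsPrimitiveRoot ζ m)
    {Q : Type*} [AddCommGroup Q] [DecidableEq Q] [Module.Free ℤ Q]
    (G : Q → Submodule k g)
    (hinternal : DirectSum.IsInternal G)
    (hsupport : AddSubgroup.closure {α : Q | G α ≠ ⊥} = ⊤)
    (hgraded : ∀ (α β : Q), ∀ x ∈ G α, ∀ y ∈ G β, ⁅x, y⁆ ∈ G (α + β))
    (τ ρ : g ≃ₗ[k] g)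
    (hρ : ρ ^ m = 1)
    (r : Q → kˣ) (hr : ∀ α β : Q, r (α + β) = r α * r β)
    (hAd : ∀ (α : Q), ∀ x ∈ G α, ρ x = ((r α : k)) • x)
    (τhat : Q ≃+ Q)
    (hτhat : ∀ α : Q, Submodule.map (τ : g →ₗ[k] g) (G α) = G (τhat α))
    (d : ℕ) (hd : 0 < d) (hτhatd : ∀ α : Q, τhat^[d] α = α)
    (ξ : k) (hξ : IsPrimitiveRoot ξ (d * m)) (hξd : ξ ^ d = ζ) :
    ∃ φ : (LaurentPolynomial k ⊗[k] g) ≃ₗ[LaurentPolynomial k]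
          (LaurentPolynomial k ⊗[k] g),
      (∀ x y : LaurentPolynomial k ⊗[k] g, φ ⁅x, y⁆ = ⁅φ x, φ y⁆) ∧
      (∀ x : LaurentPolynomial k ⊗[k] g,
        φ ((TensorProduct.congr
              (scaleVarEquiv (Units.mk0 ξ (hξ.ne_zero
                (Nat.mul_ne_zero hd.ne' hm.ne')))).symm.toLinearEquiv τ)
            (φ.symm x))
          = (TensorProduct.congr
              (scaleVarEquiv (Units.mk0 ξ (hξ.ne_zero
                (Nat.mul_ne_zero hd.ne' hm.ne')))).symm.toLinearEquiv (τ * ρ)) x) ∧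
      Submodule.map ((φ : (LaurentPolynomial k ⊗[k] g) →ₗ[LaurentPolynomial k]
              (LaurentPolynomial k ⊗[k] g)).restrictScalars k)
          (LinearMap.ker
            ((TensorProduct.congr
                (scaleVarEquiv (Units.mk0 ξ (hξ.ne_zero
                  (Nat.mul_ne_zero hd.ne' hm.ne')))).symm.toLinearEquiv τ).toLinearMap
              - LinearMap.id))
        = LinearMap.ker
            ((TensorProduct.congr
                (scaleVarEquiv (Units.mk0 ξ (hξ.ne_zero
                  (Nat.mul_ne_zero hd.ne' hm.ne')))).symm.toLinearEquiv (τ * ρ)).toLinearMap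
              - LinearMap.id) := by
  have : NeZero m := ⟨hm.ne'⟩
  set Ξ : kˣ := Units.mk0 ξ (hξ.ne_zero (Nat.mul_ne_zero hd.ne' hm.ne'))
  have hΞd : IsPrimitiveRoot (Ξ ^ d) m :=
    IsPrimitiveRoot.coe_units_iff.1 (by rwa [Units.val_pow_eq_pow_val, Units.val_mk0, hξd])
  have hrm : ∀ α, r α ^ m = 1 := by
    refine pow_eq_one_of_closure_eq_top hr hsupport fun α hα => Units.ext ?_
    obtain ⟨x, hx, hx0⟩ := Submodule.exists_mem_ne_zero_of_ne_bot hα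
    exact pow_eq_one_of_eigenvector hρ (hAd α x hx) hx0
  obtain ⟨s, hs⟩ := exists_addMonoidHom_zpow_eq (Ξ ^ d) hr fun α => by
    rw [hΞd.zpowers_eq, mem_rootsOfUnity]; exact hrm α
  set f := orbitProd (scaledVarUnit Ξ) s τhat d
  have hf : ∀ α, (f (τhat α) : LaurentPolynomial k) =
      (scaleVarEquiv Ξ).symm (f α) * algebraMap k (LaurentPolynomial k) (r α) := by
    intro α
    simp only [f]
    rw [orbitProd_apply_of_iterate_eq _ (map_scaleVarEquiv_symm_scaledVarUnit Ξ) s τhat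
      (hτhatd α), scaledVarUnit_div, sub_neg_eq_add, sub_add_cancel, ← map_zpow, zpow_natCast,
      hs]
    rfl
  have hconj := gradedDiagEquiv_congr_apply hinternal f (scaleVarEquiv Ξ).symm τ ρ τhat
    (fun α x hx => hτhat α ▸ Submodule.mem_map_of_mem hx) (fun α => r α) hAd hf
  refine ⟨gradedDiagEquiv hinternal f,
    gradedDiagEquiv_lie hinternal hgraded f (orbitProd_add _ s τhat.toAddMonoidHom d),
    fun x => by simpa using hconj ((gradedDiagEquiv hinternal f).symm x),
    map_ker_sub_id_eq_of_comm ((gradedDiagEquiv hinternal f).restrictScalars k) _ _ hconj⟩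

/-- In the setting of the erasing theorem, with `d` a period of
`τ̂` and `ξ` a primitive `dm`-th root of unity with `ξ^d = ζ`, there is an
`S'`-algebra automorphism `φ` of `g ⊗ S'` with
`φ ∘ (τ ⊗ ι⁻¹) ∘ φ⁻¹ = (τρ) ⊗ ι⁻¹`, where `ι(z) = ξ z`; consequently `φ` carries the
fixed point subalgebra of `τ ⊗ ι⁻¹` onto that of `(τρ) ⊗ ι⁻¹` (giving an isomorphism
of Lie algebras over `k[z^{dm}, z^{-dm}]`). -/
theorem statement19 {k : Type*} [Field k] [CharZero k] {g : Type*} [LieRing g] [LieAlgebra k g]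
    (m : ℕ) (hm : 0 < m) (ζ : k) (hζ : IsPrimitiveRoot ζ m)
    {Q : Type*} [AddCommGroup Q] [DecidableEq Q] [Module.Free ℤ Q]
    (G : Q → Submodule k g)
    (hinternal : DirectSum.IsInternal G)
    (hsupport : AddSubgroup.closure {α : Q | G α ≠ ⊥} = ⊤)
    (hgraded : ∀ (α β : Q), ∀ x ∈ G α, ∀ y ∈ G β, ⁅x, y⁆ ∈ G (α + β))
    (τ ρ : g ≃ₗ[k] g) (hbrτ : IsLieAut τ) (hbrρ : IsLieAut ρ)
    (hτ : τ ^ m = 1) (hρ : ρ ^ m = 1) (hcomm : τ * ρ = ρ * τ)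
    (r : Q → kˣ) (hr : ∀ α β : Q, r (α + β) = r α * r β)
    (hAd : ∀ (α : Q), ∀ x ∈ G α, ρ x = ((r α : k)) • x)
    (τhat : Q ≃+ Q)
    (hτhat : ∀ α : Q, Submodule.map (τ : g →ₗ[k] g) (G α) = G (τhat α))
    (d : ℕ) (hd : 0 < d) (hτhatd : ∀ α : Q, τhat^[d] α = α)
    (ξ : k) (hξ : IsPrimitiveRoot ξ (d * m)) (hξd : ξ ^ d = ζ) :
    ∃ φ : (LaurentPolynomial k ⊗[k] g) ≃ₗ[LaurentPolynomial k]
          (LaurentPolynomial k ⊗[k] g),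
      (∀ x y : LaurentPolynomial k ⊗[k] g, φ ⁅x, y⁆ = ⁅φ x, φ y⁆) ∧
      (∀ x : LaurentPolynomial k ⊗[k] g,
        φ ((TensorProduct.congr
              (scaleVarEquiv (Units.mk0 ξ (hξ.ne_zero
                (Nat.mul_ne_zero hd.ne' hm.ne')))).symm.toLinearEquiv τ)
            (φ.symm x))
          = (TensorProduct.congr
              (scaleVarEquiv (Units.mk0 ξ (hξ.ne_zero
                (Nat.mul_ne_zero hd.ne' hm.ne')))).symm.toLinearEquiv (τ * ρ)) x) ∧
      Submodule.map ((φ : (LaurentPolynomial k ⊗[k] g) →ₗ[LaurentPolynomial k]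
              (LaurentPolynomial k ⊗[k] g)).restrictScalars k)
          (LinearMap.ker
            ((TensorProduct.congr
                (scaleVarEquiv (Units.mk0 ξ (hξ.ne_zero
                  (Nat.mul_ne_zero hd.ne' hm.ne')))).symm.toLinearEquiv τ).toLinearMap
              - LinearMap.id))
        = LinearMap.ker
            ((TensorProduct.congr
                (scaleVarEquiv (Units.mk0 ξ (hξ.ne_zero
                  (Nat.mul_ne_zero hd.ne' hm.ne')))).symm.toLinearEquiv (τ * ρ)).toLinearMap
              - LinearMap.id) :=
  statement19_general m hm ζ hζ G hinternal hsupport hgraded τ ρ hρ r hr hAd τhat hτhat d hd hτhatd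
    ξ hξ hξd

end LoopPaper
end
end
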